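/- arXiv:2008.06649 — 8 statements merged into one kernel-verified Lean document; each statement's English description precedes it below -/
import Mathlib

section
/- The image l(O_K^{*,+}) of the group of totally positive units under the logarithmic map l is a full lattice in the hyperplane L = {x ∈ ℝ^{s+t} : x_1 + ⋯ + x_{s+t} = 0}; that is, l(O_K^{*,+}) is a discrete subgroup of ℝ^{s+t} contained in L whose ℝ-span equals L. -/
open NumberField

noncomputable section

/-- The value of an embedding `φ : K → ℂ` at a unit `u` of the ring of integers `𝓞 K`. -/
def unitVal {K : Type} [Field K] (φ : K →+* ℂ) (u : (𝓞 K)ˣ) : ℂ :=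
  φ (algebraMap (𝓞 K) K (u : 𝓞 K))

/-- `u ∈ O_K^{*,+}`: `u` is a totally positive unit, i.e. all the real embeddings
`σ_1, …, σ_s` (encoded as the `Sum.inl` components of `σ`) take positive values at `u`. -/
def IsTotPos {K : Type} [Field K] {s t : ℕ}
    (σ : Fin s ⊕ (Fin t ⊕ Fin t) → (K →+* ℂ)) (u : (𝓞 K)ˣ) : Prop :=
  ∀ i : Fin s, 0 < (unitVal (σ (Sum.inl i)) u).re

/-- The logarithmic map `l : O_K^{*,+} → ℝ^{s+t}`,
`l(a) = (log σ_1(a), …, log σ_s(a), 2 log|σ_{s+1}(a)|, …, 2 log|σ_{s+t}(a)|)`,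
with `ℝ^{s+t}` realized as `(Fin s ⊕ Fin t) → ℝ`. -/
def logMapOT {K : Type} [Field K] {s t : ℕ}
    (σ : Fin s ⊕ (Fin t ⊕ Fin t) → (K →+* ℂ)) (u : (𝓞 K)ˣ) :
    (Fin s ⊕ Fin t) → ℝ :=
  Sum.elim
    (fun i => Real.log (unitVal (σ (Sum.inl i)) u).re)
    (fun k => 2 * Real.log ‖unitVal (σ (Sum.inr (Sum.inl k))) u‖)

/-- The composite `p ∘ l : O_K^{*,+} → ℝ^s`, where `p : ℝ^{s+t} → ℝ^s` is the projection
onto the first `s` coordinates. -/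
def plMapOT {K : Type} [Field K] {s t : ℕ}
    (σ : Fin s ⊕ (Fin t ⊕ Fin t) → (K →+* ℂ)) (u : (𝓞 K)ˣ) :
    Fin s → ℝ :=
  fun i => logMapOT σ u (Sum.inl i)

open scoped Classical
open NumberField.InfinitePlace NumberField.Units NumberField.Units.dirichletUnitTheorem

section Helpers

variable {K : Type} [Field K] [NumberField K]

lemma sum_mult_log_unit_eq_zero (u : (𝓞 K)ˣ) :
    ∑ w : InfinitePlace K, (mult w : ℝ) * Real.log (w (algebraMap (𝓞 K) K (u : 𝓞 K))) = 0 := by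
  have h := congr_arg Real.log (prod_eq_abs_norm (K := K) (algebraMap (𝓞 K) K (u : 𝓞 K)))
  rw [show algebraMap (𝓞 K) K (u : 𝓞 K) = ((u : 𝓞 K) : K) from rfl] at h
  rw [Units.norm, Rat.cast_one, Real.log_one, Real.log_prod] at h
  · simp_rw [Real.log_pow] at h
    simpa using h
  · exact fun w _ => pow_ne_zero _ (AbsoluteValue.ne_zero _ (coe_ne_zero u))

lemma discrete_of_mapsTo {E F : Type*} [TopologicalSpace E] [TopologicalSpace F]
    {A : Set E} {B : Set F} [DiscreteTopology ↥B] {f : E → F} (hc : Continuous f)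
    (hm : Set.MapsTo f A B) (hi : Set.InjOn f A) : DiscreteTopology ↥A :=
  DiscreteTopology.of_continuous_injective (hc.restrict hm)
    (fun a b hab => Subtype.ext (hi a.2 b.2 (congrArg Subtype.val hab)))

lemma sum_split (x : InfinitePlace K → ℝ) :
    ∑ w, x w = x w₀ + ∑ w : {w : InfinitePlace K // w ≠ w₀}, x w.val := by
  rw [← Finset.insert_erase (Finset.mem_univ (w₀ : InfinitePlace K)),
    Finset.sum_insert (Finset.notMem_erase _ _)]
  congr 1
  exact Finset.sum_subtype _
    (fun w => ⟨Finset.ne_of_mem_erase, fun h => Finset.mem_erase_of_ne_of_mem h (Finset.mem_univ w)⟩) x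

end Helpers

/-- the image `l(O_K^{*,+})` of the group of totally positive units under the
logarithmic map `l` is a full lattice in the hyperplane
`L = {x ∈ ℝ^{s+t} : x_1 + ⋯ + x_{s+t} = 0}`: it is contained in `L`, it is discrete, and
its `ℝ`-span is equal to `L`. -/
theorem logMap_image_totPosUnits_isFullLattice_in_traceZeroHyperplane
    (K : Type) [Field K] [NumberField K] (s t : ℕ) (hs : 1 ≤ s) (ht : 1 ≤ t)
    (σ : Fin s ⊕ (Fin t ⊕ Fin t) → (K →+* ℂ))
    (hdeg : Module.finrank ℚ K = s + 2 * t)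
    (hσbij : Function.Bijective σ)
    (hσre : ∀ (i : Fin s) (x : K), ((σ (Sum.inl i)) x).im = 0)
    (hσnotre : ∀ k : Fin t, ∃ x : K, ((σ (Sum.inr (Sum.inl k))) x).im ≠ 0)
    (hσconj : ∀ k : Fin t,
      σ (Sum.inr (Sum.inr k)) = (starRingEnd ℂ).comp (σ (Sum.inr (Sum.inl k))))
    :
    (logMapOT σ '' {u : (𝓞 K)ˣ | IsTotPos σ u} ⊆ {v : (Fin s ⊕ Fin t) → ℝ | ∑ j, v j = 0}) ∧
    DiscreteTopology ↥(logMapOT σ '' {u : (𝓞 K)ˣ | IsTotPos σ u}) ∧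
    (Submodule.span ℝ (logMapOT σ '' {u : (𝓞 K)ˣ | IsTotPos σ u}) :
        Set ((Fin s ⊕ Fin t) → ℝ)) = {v : (Fin s ⊕ Fin t) → ℝ | ∑ j, v j = 0} := by
  classical
  -- basic facts about the embeddings
  have hre : ∀ i : Fin s, ComplexEmbedding.IsReal (σ (Sum.inl i)) := by
    intro i
    rw [ComplexEmbedding.isReal_iff]
    ext x
    rw [ComplexEmbedding.conjugate_coe_eq]
    exact Complex.conj_eq_iff_im.mpr (hσre i x)
  have hnre : ∀ k : Fin t, ¬ ComplexEmbedding.IsReal (σ (Sum.inr (Sum.inl k))) := by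
    intro k h
    obtain ⟨x, hx⟩ := hσnotre k
    have h2 : ComplexEmbedding.conjugate (σ (Sum.inr (Sum.inl k))) x
        = (σ (Sum.inr (Sum.inl k))) x := by rw [ComplexEmbedding.isReal_iff.mp h]
    rw [ComplexEmbedding.conjugate_coe_eq] at h2
    exact hx (Complex.conj_eq_iff_im.mp h2)
  have hconj' : ∀ k : Fin t, ComplexEmbedding.conjugate (σ (Sum.inr (Sum.inl k)))
      = σ (Sum.inr (Sum.inr k)) := by
    intro k
    ext x
    rw [ComplexEmbedding.conjugate_coe_eq, hσconj k]
    rfl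
  -- the place-indexing bijection
  set ef : (Fin s ⊕ Fin t) → InfinitePlace K :=
    fun j => InfinitePlace.mk (σ (Sum.elim Sum.inl (fun k => Sum.inr (Sum.inl k)) j)) with hef
  have hefinj : Function.Injective ef := by
    intro j j' h
    rcases InfinitePlace.mk_eq_iff.mp h with h1 | h1
    · have h2 := hσbij.1 h1
      cases j <;> cases j' <;> simpa using h2
    · cases j with
      | inl i =>
        simp only [Sum.elim_inl] at h1
        rw [ComplexEmbedding.isReal_iff.mp (hre i)] at h1
        have h2 := hσbij.1 h1
        cases j' <;> simpa using h2
      | inr k =>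
        cases j' with
        | inl i' =>
          exfalso
          have h3 : ComplexEmbedding.IsReal
              (ComplexEmbedding.conjugate (σ (Sum.inr (Sum.inl k)))) := h1 ▸ hre i'
          exact hnre k (ComplexEmbedding.isReal_conjugate_iff.mp h3)
        | inr k' =>
          simp only [Sum.elim_inr] at h1
          rw [hconj' k] at h1
          have h2 := hσbij.1 h1
          simpa using h2
  have hefsurj : Function.Surjective ef := by
    intro w
    obtain ⟨a, ha⟩ := hσbij.2 (InfinitePlace.embedding w)
    rcases a with i | k | k
    · exact ⟨Sum.inl i, by simp only [hef, Sum.elim_inl]; rw [ha, InfinitePlace.mk_embedding]⟩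
    · exact ⟨Sum.inr k, by simp only [hef, Sum.elim_inr]; rw [ha, InfinitePlace.mk_embedding]⟩
    · refine ⟨Sum.inr k, ?_⟩
      simp only [hef, Sum.elim_inr]
      rw [← InfinitePlace.mk_conjugate_eq, hconj' k, ha, InfinitePlace.mk_embedding]
  set e : (Fin s ⊕ Fin t) ≃ InfinitePlace K := Equiv.ofBijective ef ⟨hefinj, hefsurj⟩ with he
  have heapp : ∀ j, e j = ef j := fun j => rfl
  -- multiplicities
  have hmult1 : ∀ i : Fin s, mult (ef (Sum.inl i)) = 1 := by
    intro i
    have : InfinitePlace.IsReal (ef (Sum.inl i)) := ⟨σ (Sum.inl i), hre i, rfl⟩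
    rw [mult, if_pos this]
  have hmult2 : ∀ k : Fin t, mult (ef (Sum.inr k)) = 2 := by
    intro k
    have : ¬ InfinitePlace.IsReal (ef (Sum.inr k)) := by
      rintro ⟨ψ, hψ, hmk⟩
      rcases InfinitePlace.mk_eq_iff.mp hmk with h1 | h1
      · exact hnre k (h1 ▸ hψ)
      · exact hnre k (h1 ▸ ComplexEmbedding.isReal_conjugate_iff.mpr hψ)
    rw [mult, if_neg this]
  -- the map to the place-indexed log vector
  set g : (𝓞 K)ˣ → (InfinitePlace K → ℝ) :=
    fun u w => (mult w : ℝ) * Real.log (w (algebraMap (𝓞 K) K (u : 𝓞 K))) with hg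
  have hkey : ∀ u : (𝓞 K)ˣ, IsTotPos σ u → logMapOT σ u = fun j => g u (ef j) := by
    intro u hu
    funext j
    cases j with
    | inl i =>
      have him : (unitVal (σ (Sum.inl i)) u).im = 0 := hσre i _
      have habs : ‖unitVal (σ (Sum.inl i)) u‖ = (unitVal (σ (Sum.inl i)) u).re := by
        rw [show unitVal (σ (Sum.inl i)) u = (((unitVal (σ (Sum.inl i)) u).re : ℝ) : ℂ) from
          Complex.ext rfl (by simpa using him), Complex.norm_real]
        simp [abs_of_pos (hu i)]
      show Real.log (unitVal (σ (Sum.inl i)) u).re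
          = (mult (ef (Sum.inl i)) : ℝ) * Real.log (‖unitVal (σ (Sum.inl i)) u‖)
      rw [hmult1, habs, Nat.cast_one, one_mul]
    | inr k =>
      show 2 * Real.log (‖unitVal (σ (Sum.inr (Sum.inl k))) u‖)
          = (mult (ef (Sum.inr k)) : ℝ) * Real.log (‖unitVal (σ (Sum.inr (Sum.inl k))) u‖)
      rw [hmult2]
      norm_num

  -- part 1
  have hpart1 : logMapOT σ '' {u : (𝓞 K)ˣ | IsTotPos σ u}
      ⊆ {v : (Fin s ⊕ Fin t) → ℝ | ∑ j, v j = 0} := by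
    rintro _ ⟨u, hu, rfl⟩
    show ∑ j, logMapOT σ u j = 0
    rw [hkey u hu, ← sum_mult_log_unit_eq_zero u]
    exact Equiv.sum_comp e (g u)
  -- the set in the place-indexed space
  set S2 : Set (InfinitePlace K → ℝ) := g '' {u : (𝓞 K)ˣ | IsTotPos σ u} with hS2
  have hS2sum : ∀ x ∈ S2, ∑ w, x w = 0 := by
    rintro _ ⟨u, hu, rfl⟩
    exact sum_mult_log_unit_eq_zero u
  set π : (InfinitePlace K → ℝ) →ₗ[ℝ] ({w : InfinitePlace K // w ≠ w₀} → ℝ) :=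
    LinearMap.funLeft ℝ ℝ Subtype.val with hπ
  have hπinj : ∀ x y : InfinitePlace K → ℝ, ∑ w, x w = 0 → ∑ w, y w = 0 → π x = π y → x = y := by
    intro x y hx hy hxy
    have hxy' : ∀ w : {w : InfinitePlace K // w ≠ w₀}, x w.val = y w.val :=
      fun w => congrFun hxy w
    funext w
    by_cases hw : w = w₀
    · subst hw
      have hx' := sum_split x
      have hy' := sum_split y
      have hsum : ∑ w : {w : InfinitePlace K // w ≠ w₀}, x w.val
          = ∑ w : {w : InfinitePlace K // w ≠ w₀}, y w.val :=
        Finset.sum_congr rfl (fun w _ => hxy' w)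
      rw [hx] at hx'
      rw [hy] at hy'
      linarith
    · exact hxy' ⟨w, hw⟩
  have hπg : ∀ u : (𝓞 K)ˣ, π (g u) = logEmbedding K (Additive.ofMul u) := fun u => rfl
  have hπmem : ∀ x ∈ S2, π x ∈ (unitLattice K : Set ({w : InfinitePlace K // w ≠ w₀} → ℝ)) := by
    rintro _ ⟨u, hu, rfl⟩
    show π (g u) ∈ unitLattice K
    rw [hπg u]
    exact ⟨Additive.ofMul u, trivial, rfl⟩
  -- squares of units are totally positive
  have hunitval_ne : ∀ (φ : K →+* ℂ) (u : (𝓞 K)ˣ), unitVal φ u ≠ 0 := by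
    intro φ u h
    exact coe_ne_zero u ((map_eq_zero φ).mp h)
  have htp2 : ∀ u : (𝓞 K)ˣ, IsTotPos σ (u ^ 2) := by
    intro u i
    have hval : unitVal (σ (Sum.inl i)) (u ^ 2) = (unitVal (σ (Sum.inl i)) u) ^ 2 := by
      rw [unitVal, unitVal, Units.val_pow_eq_pow_val, map_pow, map_pow]
    have him : (unitVal (σ (Sum.inl i)) u).im = 0 := hσre i _
    have hre0 : (unitVal (σ (Sum.inl i)) u).re ≠ 0 := by
      intro h0
      exact hunitval_ne (σ (Sum.inl i)) u (Complex.ext h0 him)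
    rw [hval, sq, Complex.mul_re, him, mul_zero, sub_zero]
    exact mul_self_pos.mpr hre0
  have hlog2 : ∀ u : (𝓞 K)ˣ, π (g (u ^ 2)) = (2:ℝ) • logEmbedding K (Additive.ofMul u) := by
    intro u
    rw [hπg]
    funext w
    rw [Pi.smul_apply, smul_eq_mul, logEmbedding_component, logEmbedding_component]
    have hcoe : ((algebraMap (𝓞 K) K) ((u ^ 2 : (𝓞 K)ˣ) : 𝓞 K)) = ((algebraMap (𝓞 K) K) ((u : (𝓞 K)ˣ) : 𝓞 K)) ^ 2 := by
      rw [Units.val_pow_eq_pow_val, map_pow]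
    rw [show ((u ^ 2 : (𝓞 K)ˣ) : K) = (((u : (𝓞 K)ˣ) : 𝓞 K) : K) ^ 2 from hcoe, map_pow,
      Real.log_pow]
    push_cast
    ring
  -- the span of the image of π
  have hπspan : Submodule.span ℝ (π '' S2) = ⊤ := by
    rw [eq_top_iff, ← unitLattice_span_eq_top K]
    refine Submodule.span_le.mpr ?_
    rintro v hv
    obtain ⟨a, -, rfl⟩ := hv
    set u : (𝓞 K)ˣ := Additive.toMul a with hu
    have h2 : π (g (u ^ 2)) ∈ Submodule.span ℝ (π '' S2) :=
      Submodule.subset_span ⟨g (u ^ 2), ⟨u ^ 2, htp2 u, rfl⟩, rfl⟩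
    rw [hlog2 u] at h2
    have h3 := Submodule.smul_mem (Submodule.span ℝ (π '' S2)) ((2:ℝ)⁻¹) h2
    rw [smul_smul, inv_mul_cancel₀ two_ne_zero, one_smul] at h3
    exact h3
  -- the hyperplane in the place-indexed space
  set totalP : (InfinitePlace K → ℝ) →ₗ[ℝ] ℝ := ∑ w, LinearMap.proj w with htotalP
  have htotalPapply : ∀ x : InfinitePlace K → ℝ, totalP x = ∑ w, x w := by
    intro x
    rw [htotalP, LinearMap.sum_apply]
    simp [LinearMap.proj_apply]
  have hspanle : Submodule.span ℝ S2 ≤ LinearMap.ker totalP := by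
    rw [Submodule.span_le]
    intro x hx
    rw [SetLike.mem_coe, LinearMap.mem_ker, htotalPapply]
    exact hS2sum x hx
  have hspan2 : Submodule.span ℝ S2 = LinearMap.ker totalP := by
    refine le_antisymm hspanle ?_
    intro x hx
    rw [LinearMap.mem_ker, htotalPapply x] at hx
    have hmapeq : Submodule.map π (Submodule.span ℝ S2) = ⊤ := by
      rw [← Submodule.span_image]
      exact hπspan
    have hπx : π x ∈ Submodule.map π (Submodule.span ℝ S2) := by
      rw [hmapeq]; trivial
    obtain ⟨y, hy, hyx⟩ := hπx
    have hy0 : ∑ w, y w = 0 := by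
      have h4 := hspanle hy
      rwa [LinearMap.mem_ker, htotalPapply y] at h4
    rw [← hπinj y x hy0 hx hyx]
    exact hy
  -- the coordinate change
  set C : (InfinitePlace K → ℝ) ≃ₗ[ℝ] ((Fin s ⊕ Fin t) → ℝ) := LinearEquiv.funCongrLeft ℝ ℝ e with hC
  have hAC : logMapOT σ '' {u : (𝓞 K)ˣ | IsTotPos σ u} = ⇑C '' S2 := by
    rw [hS2, ← Set.image_comp]
    exact Set.image_congr fun u hu => by rw [hkey u hu]; rfl
  -- discreteness
  have hdiscS : DiscreteTopology ↥(⇑C '' S2) := by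
    haveI hBdisc : DiscreteTopology
        ↥(unitLattice K : Set ({w : InfinitePlace K // w ≠ w₀} → ℝ)) :=
      inferInstanceAs (DiscreteTopology (unitLattice K))
    refine discrete_of_mapsTo (B := (unitLattice K : Set ({w : InfinitePlace K // w ≠ w₀} → ℝ)))
      (f := fun v => π (C.symm v)) ?_ ?_ ?_
    · exact (π.comp C.symm.toLinearMap).continuous_of_finiteDimensional
    · rintro _ ⟨x, hx, rfl⟩
      show π (C.symm (C x)) ∈ (unitLattice K : Set ({w : InfinitePlace K // w ≠ w₀} → ℝ))
      rw [C.symm_apply_apply]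
      exact hπmem x hx
    · rintro _ ⟨x, hx, rfl⟩ _ ⟨x', hx', rfl⟩ heq
      have heq' : π (C.symm (C x)) = π (C.symm (C x')) := heq
      rw [C.symm_apply_apply, C.symm_apply_apply] at heq'
      rw [hπinj x x' (hS2sum x hx) (hS2sum x' hx') heq']
  refine ⟨hpart1, ?_, ?_⟩
  · rw [hAC]
    exact hdiscS
  · rw [hAC, ← LinearEquiv.coe_coe, Submodule.span_image, hspan2]
    ext v
    simp only [SetLike.mem_coe, Submodule.mem_map, LinearMap.mem_ker, Set.mem_setOf_eq]
    constructor
    · rintro ⟨x, hx, rfl⟩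
      rw [htotalPapply x] at hx
      show ∑ j, x (e j) = 0
      rw [Equiv.sum_comp e x]
      exact hx
    · intro hv
      refine ⟨C.symm v, ?_, C.apply_symm_apply v⟩
      rw [htotalPapply]
      show ∑ w, v (e.symm w) = 0
      rw [Equiv.sum_comp e.symm v]
      exact hv
end
end

section
/- There exists a subgroup U of O_K^{*,+} such that p(l(U)) is a full lattice in ℝ^s (an admissible subgroup). -/
open NumberField

noncomputable section

set_option linter.unusedSectionVars false

section Aux

variable {K : Type} [Field K] [NumberField K]

lemma unitVal_mul (φ : K →+* ℂ) (u v : (𝓞 K)ˣ) :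
    unitVal φ (u * v) = unitVal φ u * unitVal φ v := by
  simp [unitVal]

lemma unitVal_ne_zero (φ : K →+* ℂ) (u : (𝓞 K)ˣ) : unitVal φ u ≠ 0 := by
  simp only [unitVal]
  rw [map_ne_zero]
  exact NumberField.Units.coe_ne_zero u

lemma unitVal_inv (φ : K →+* ℂ) (u : (𝓞 K)ˣ) :
    unitVal φ u⁻¹ = (unitVal φ u)⁻¹ := by
  have h : unitVal φ u * unitVal φ u⁻¹ = 1 := by
    rw [← unitVal_mul, mul_inv_cancel]
    simp [unitVal]
  exact (inv_eq_of_mul_eq_one_right h).symm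

lemma unitVal_coe (φ : K →+* ℂ) (u : (𝓞 K)ˣ) : unitVal φ u = φ (u : K) := rfl

end Aux

/-- there exists a subgroup `U` of `O_K^{*,+}` (a subgroup of the unit group
consisting of totally positive units) such that `p(l(U))` is a full lattice in `ℝ^s`,
i.e. it is discrete and its `ℝ`-span is all of `ℝ^s` (an admissible subgroup). -/
theorem exists_admissible_subgroup
    (K : Type) [Field K] [NumberField K] (s t : ℕ) (hs : 1 ≤ s) (ht : 1 ≤ t)
    (σ : Fin s ⊕ (Fin t ⊕ Fin t) → (K →+* ℂ))
    (hdeg : Module.finrank ℚ K = s + 2 * t)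
    (hσbij : Function.Bijective σ)
    (hσre : ∀ (i : Fin s) (x : K), ((σ (Sum.inl i)) x).im = 0)
    (hσnotre : ∀ k : Fin t, ∃ x : K, ((σ (Sum.inr (Sum.inl k))) x).im ≠ 0)
    (hσconj : ∀ k : Fin t,
      σ (Sum.inr (Sum.inr k)) = (starRingEnd ℂ).comp (σ (Sum.inr (Sum.inl k))))
    :
    ∃ U : Subgroup (𝓞 K)ˣ,
      (∀ u ∈ U, IsTotPos σ u) ∧
      DiscreteTopology ↥(plMapOT σ '' (U : Set (𝓞 K)ˣ)) ∧
      Submodule.span ℝ (plMapOT σ '' (U : Set (𝓞 K)ˣ)) = ⊤ := by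
  classical
  -- real and complex infinite places
  set wr : Fin s → InfinitePlace K := fun i => InfinitePlace.mk (σ (Sum.inl i)) with hwrdef
  have hreal : ∀ i, (wr i).IsReal := by
    intro i
    rw [hwrdef]
    rw [NumberField.InfinitePlace.isReal_mk_iff, NumberField.ComplexEmbedding.isReal_iff]
    ext x
    rw [NumberField.ComplexEmbedding.conjugate_coe_eq]
    exact Complex.ext (by simp) (by simp [hσre i x])
  have hmult : ∀ i, (wr i).mult = 1 := by
    intro i; simp [NumberField.InfinitePlace.mult, hreal i]
  have hwrinj : Function.Injective wr := by
    intro i j hij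
    rw [hwrdef] at hij
    simp only [NumberField.InfinitePlace.mk_eq_iff] at hij
    have : σ (Sum.inl i) = σ (Sum.inl j) := by
      rcases hij with h | h
      · exact h
      · rw [← h]
        ext x
        rw [NumberField.ComplexEmbedding.conjugate_coe_eq]
        exact Complex.ext (by simp) (by simp [hσre i x])
    have := hσbij.1 this
    exact Sum.inl_injective this
  set wc : InfinitePlace K := InfinitePlace.mk (σ (Sum.inr (Sum.inl ⟨0, ht⟩))) with hwcdef
  have hwc : ¬ wc.IsReal := by
    rw [hwcdef, NumberField.InfinitePlace.isReal_mk_iff]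
    intro h
    obtain ⟨x, hx⟩ := hσnotre ⟨0, ht⟩
    have h2 := congrFun (congrArg (fun f => f.toFun) (NumberField.ComplexEmbedding.isReal_iff.mp h)) x
    have h3 : (starRingEnd ℂ) ((σ (Sum.inr (Sum.inl ⟨0, ht⟩))) x) = (σ (Sum.inr (Sum.inl ⟨0, ht⟩))) x := h2
    apply hx
    have := congrArg Complex.im h3
    simp at this
    linarith [this]
  have hwcne : ∀ i, wc ≠ wr i := fun i h => hwc (h ▸ hreal i)
  -- the key computation of plMapOT in terms of places
  have hpl : ∀ (u : (𝓞 K)ˣ) (i : Fin s),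
      plMapOT σ u i = Real.log (wr i (u : K)) := by
    intro u i
    have him : (unitVal (σ (Sum.inl i)) u).im = 0 := hσre i _
    have habs : ‖unitVal (σ (Sum.inl i)) u‖ = |(unitVal (σ (Sum.inl i)) u).re| :=
      (Complex.abs_re_eq_norm.mpr him).symm
    rw [hwrdef]
    show Real.log (unitVal (σ (Sum.inl i)) u).re = _
    rw [NumberField.InfinitePlace.apply, ← unitVal_coe, habs, Real.log_abs]
  -- the linear map T
  set W := {w : InfinitePlace K // w ≠ NumberField.Units.dirichletUnitTheorem.w₀} with hWdef
  set S : (W → ℝ) →ₗ[ℝ] ℝ := ∑ w : W, LinearMap.proj w with hSdef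
  set T : (W → ℝ) →ₗ[ℝ] (Fin s → ℝ) :=
    LinearMap.pi (fun i => if h : wr i = NumberField.Units.dirichletUnitTheorem.w₀ then -S
      else LinearMap.proj (⟨wr i, h⟩ : W)) with hTdef
  have hSapply : ∀ x : W → ℝ, S x = ∑ w : W, x w := by
    intro x
    rw [hSdef]
    simp [LinearMap.sum_apply]
  have hTapply : ∀ (x : W → ℝ) (i : Fin s),
      T x i = if h : wr i = NumberField.Units.dirichletUnitTheorem.w₀ then -(∑ w : W, x w) else x ⟨wr i, h⟩ := by
    intro x i
    rw [hTdef]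
    by_cases h : wr i = NumberField.Units.dirichletUnitTheorem.w₀
    · simp only [LinearMap.pi_apply, dif_pos h, LinearMap.neg_apply, hSapply]
    · simp only [LinearMap.pi_apply, dif_neg h, LinearMap.proj_apply]
  have hT : ∀ u : (𝓞 K)ˣ,
      T (NumberField.Units.logEmbedding K (Additive.ofMul u)) = plMapOT σ u := by
    intro u
    funext i
    rw [hTapply, hpl]
    by_cases h : wr i = NumberField.Units.dirichletUnitTheorem.w₀
    · rw [dif_pos h, NumberField.Units.dirichletUnitTheorem.sum_logEmbedding_component, h]
      have : (NumberField.Units.dirichletUnitTheorem.w₀ : InfinitePlace K).mult = 1 := h ▸ hmult i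
      rw [this]
      push_cast
      ring
    · rw [dif_neg h, NumberField.Units.dirichletUnitTheorem.logEmbedding_component, hmult i]
      push_cast
      ring
  -- surjectivity of T
  have hTsurj : Function.Surjective T := by
    rw [← LinearMap.range_eq_top, eq_top_iff, ← (Pi.basisFun ℝ (Fin s)).span_eq,
      Submodule.span_le]
    rintro _ ⟨j, rfl⟩
    rw [SetLike.mem_coe, LinearMap.mem_range, Pi.basisFun_apply]
    by_cases hcase : ∃ i₀, wr i₀ = NumberField.Units.dirichletUnitTheorem.w₀
    · obtain ⟨i₀, hi₀⟩ := hcase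
      have hwcW : wc ≠ NumberField.Units.dirichletUnitTheorem.w₀ := hi₀ ▸ hwcne i₀
      by_cases hj : j = i₀
      · refine ⟨fun w : W => if w = ⟨wc, hwcW⟩ then (-1:ℝ) else 0, ?_⟩
        funext i
        rw [hTapply, Pi.single_apply]
        by_cases h : wr i = NumberField.Units.dirichletUnitTheorem.w₀
        · have hii : i = i₀ := hwrinj (h.trans hi₀.symm)
          rw [dif_pos h, if_pos (hii.trans hj.symm)]
          rw [Finset.sum_ite_eq']
          simp [Finset.sum_ite_eq']
        · have h1 : ¬ ((⟨wr i, h⟩ : W) = ⟨wc, hwcW⟩) := by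
            simp only [ne_eq, Subtype.mk.injEq]
            exact fun hc => hwcne i hc.symm
          have h2 : ¬ (i = j) := fun hc => h ((hc.trans hj) ▸ hi₀)
          rw [dif_neg h]
          simp [h1, h2]
      · have hwjW : wr j ≠ NumberField.Units.dirichletUnitTheorem.w₀ := by
          intro hc; exact hj (hwrinj (hc.trans hi₀.symm))
        refine ⟨fun w : W => (if w = ⟨wr j, hwjW⟩ then (1:ℝ) else 0)
          - (if w = ⟨wc, hwcW⟩ then (1:ℝ) else 0), ?_⟩
        funext i
        rw [hTapply, Pi.single_apply]
        by_cases h : wr i = NumberField.Units.dirichletUnitTheorem.w₀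
        · have hii : i = i₀ := hwrinj (h.trans hi₀.symm)
          have h2 : ¬ (i = j) := fun hc => hj (hc.symm.trans hii)
          rw [dif_pos h]
          simp only [Finset.sum_sub_distrib]
          rw [Finset.sum_ite_eq', Finset.sum_ite_eq']
          simp [Finset.sum_sub_distrib, Finset.sum_ite_eq', h2]
        · have h1 : ¬ ((⟨wr i, h⟩ : W) = ⟨wc, hwcW⟩) := by
            simp only [ne_eq, Subtype.mk.injEq]
            exact fun hc => hwcne i hc.symm
          have h3 : ((⟨wr i, h⟩ : W) = ⟨wr j, hwjW⟩) ↔ (i = j) := by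
            simp only [Subtype.mk.injEq]
            exact ⟨fun hc => hwrinj hc, fun hc => hc ▸ rfl⟩
          rw [dif_neg h]
          simp [h1, h3]
    · push_neg at hcase
      refine ⟨fun w : W => if w = ⟨wr j, hcase j⟩ then (1:ℝ) else 0, ?_⟩
      funext i
      rw [hTapply, dif_neg (hcase i), Pi.single_apply]
      have h3 : ((⟨wr i, hcase i⟩ : W) = ⟨wr j, hcase j⟩) ↔ (i = j) := by
        simp only [Subtype.mk.injEq]
        exact ⟨fun hc => hwrinj hc, fun hc => hc ▸ rfl⟩
      simp [h3]
  -- the range of plMapOT spans ℝ^s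
  have hspanAll : Submodule.span ℝ (Set.range (plMapOT σ)) = ⊤ := by
    have h1 : T '' (NumberField.Units.unitLattice K : Set (W → ℝ)) ⊆ Set.range (plMapOT σ) := by
      rintro _ ⟨x, hx, rfl⟩
      obtain ⟨y, -, rfl⟩ := hx
      exact ⟨y.toMul, (hT y.toMul).symm⟩
    refine le_antisymm le_top ?_
    calc (⊤ : Submodule ℝ (Fin s → ℝ)) = Submodule.map T ⊤ := by
          rw [Submodule.map_top, LinearMap.range_eq_top.mpr hTsurj]
      _ = Submodule.map T
          (Submodule.span ℝ (NumberField.Units.unitLattice K : Set (W → ℝ))) := by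
          rw [NumberField.Units.dirichletUnitTheorem.unitLattice_span_eq_top]
      _ = Submodule.span ℝ (T '' (NumberField.Units.unitLattice K : Set (W → ℝ))) := by
          rw [Submodule.span_image]
      _ ≤ Submodule.span ℝ (Set.range (plMapOT σ)) := Submodule.span_mono h1
  -- extract a basis from the spanning set
  obtain ⟨b, hbsub, hbspan, hbli⟩ := exists_linearIndependent ℝ (Set.range (plMapOT σ))
  rw [hspanAll] at hbspan
  have hbfin : b.Finite := hbli.setFinite
  haveI : Finite b := hbfin.to_subtype
  set B : Module.Basis b ℝ (Fin s → ℝ) :=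
    Module.Basis.mk hbli (by rw [Subtype.range_coe]; exact hbspan.ge) with hBdef
  set B2 : Module.Basis b ℝ (Fin s → ℝ) :=
    B.isUnitSMul (w := fun _ => (2:ℝ)) (fun _ => isUnit_iff_ne_zero.mpr two_ne_zero) with hB2def
  -- choose units realizing the basis vectors
  have hex : ∀ x : b, ∃ g : (𝓞 K)ˣ, plMapOT σ g = (x : Fin s → ℝ) := fun x => hbsub x.2
  choose gu hgu using hex
  -- homomorphism properties of plMapOT
  have hplmul : ∀ g h : (𝓞 K)ˣ, plMapOT σ (g * h) = plMapOT σ g + plMapOT σ h := by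
    intro g h
    rw [← hT, ← hT, ← hT, ← map_add, ← map_add, ← ofMul_mul]
  have hplone : plMapOT σ (1 : (𝓞 K)ˣ) = 0 := by
    rw [← hT]
    simp only [ofMul_one, map_zero]
  have hplinv : ∀ g : (𝓞 K)ˣ, plMapOT σ g⁻¹ = -plMapOT σ g := by
    intro g
    rw [← hT, ← hT, ← map_neg, ← map_neg, ← ofMul_inv]
  -- positivity facts
  have him : ∀ (i : Fin s) (g : (𝓞 K)ˣ), (unitVal (σ (Sum.inl i)) g).im = 0 :=
    fun i g => hσre i _
  have hne0 : ∀ (i : Fin s) (g : (𝓞 K)ˣ), (unitVal (σ (Sum.inl i)) g).re ≠ 0 := by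
    intro i g h0
    exact unitVal_ne_zero (σ (Sum.inl i)) g
      (Complex.ext (by simpa using h0) (by simpa using him i g))
  have hsqpos : ∀ (g : (𝓞 K)ˣ) (i : Fin s), 0 < (unitVal (σ (Sum.inl i)) (g ^ 2)).re := by
    intro g i
    rw [pow_two, unitVal_mul, Complex.mul_re, him i g, mul_zero, sub_zero]
    exact mul_self_pos.mpr (hne0 i g)
  -- relating generators to scaled basis vectors
  have hgen : ∀ x : b, plMapOT σ ((gu x) ^ 2) = B2 x := by
    intro x
    rw [pow_two, hplmul, hgu, hB2def, Module.Basis.isUnitSMul_apply, hBdef, Module.Basis.coe_mk, two_smul]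
  -- the subgroup
  refine ⟨Subgroup.closure (Set.range fun x : b => (gu x) ^ 2), ?_, ?_, ?_⟩
  · -- total positivity
    intro g hg
    induction hg using Subgroup.closure_induction with
    | mem x hx =>
      obtain ⟨y, rfl⟩ := hx
      intro i
      exact hsqpos (gu y) i
    | one =>
      intro i
      simp [unitVal]
    | mul x y hx hy ihx ihy =>
      intro i
      rw [unitVal_mul, Complex.mul_re, him i x, him i y, mul_zero, sub_zero]
      exact mul_pos (ihx i) (ihy i)
    | inv x hx ihx =>
      intro i
      rw [unitVal_inv, Complex.inv_re]
      exact div_pos (ihx i) (Complex.normSq_pos.mpr (unitVal_ne_zero _ _))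
  · -- discreteness
    have himsub : plMapOT σ '' ((Subgroup.closure (Set.range fun x : b => (gu x) ^ 2) :
        Subgroup (𝓞 K)ˣ) : Set (𝓞 K)ˣ) ⊆
        (Submodule.span ℤ (Set.range ⇑B2) : Set (Fin s → ℝ)) := by
      rintro _ ⟨g, hg, rfl⟩
      induction hg using Subgroup.closure_induction with
      | mem x hx =>
        obtain ⟨y, rfl⟩ := hx
        rw [hgen y]
        exact Submodule.subset_span ⟨y, rfl⟩
      | one =>
        rw [hplone]
        exact zero_mem _
      | mul x y hx hy ihx ihy =>
        rw [hplmul]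
        exact add_mem ihx ihy
      | inv x hx ihx =>
        rw [hplinv]
        exact neg_mem ihx
    exact DiscreteTopology.of_subset
      (inferInstance : DiscreteTopology (Submodule.span ℤ (Set.range ⇑B2))) himsub
  · -- spanning
    have hss : Set.range ⇑B2 ⊆ plMapOT σ '' ((Subgroup.closure
        (Set.range fun x : b => (gu x) ^ 2) : Subgroup (𝓞 K)ˣ) : Set (𝓞 K)ˣ) := by
      rintro _ ⟨x, rfl⟩
      exact ⟨(gu x) ^ 2, Subgroup.subset_closure ⟨x, rfl⟩, hgen x⟩
    refine le_antisymm le_top ?_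
    rw [← B2.span_eq]
    exact Submodule.span_mono hss



end
end

section
/- If U ≤ O_K^{*,+} is an admissible subgroup, then there exists an ℝ-linear map B : ℝ^s → ℝ^t such that for every a ∈ U and every 1 ≤ k ≤ t one has 2 log|σ_{s+k}(a)| = B(log σ_1(a), …, log σ_s(a))_k; equivalently, l(a) = (p(l(a)), B(p(l(a)))) for all a ∈ U. -/
open NumberField

noncomputable section

set_option linter.unusedSectionVars false
set_option maxHeartbeats 1000000

namespace AdmAux

variable {K : Type} [Field K] [NumberField K] {s t : ℕ}

lemma unitVal_mul (φ : K →+* ℂ) (u v : (𝓞 K)ˣ) :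
    unitVal φ (u * v) = unitVal φ u * unitVal φ v := by
  simp [unitVal, Units.val_mul, map_mul]

lemma unitVal_one (φ : K →+* ℂ) : unitVal φ (1 : (𝓞 K)ˣ) = 1 := by
  simp [unitVal]

lemma unitVal_ne_zero (φ : K →+* ℂ) (u : (𝓞 K)ˣ) : unitVal φ u ≠ 0 := by
  have h : unitVal φ u * unitVal φ u⁻¹ = 1 := by
    rw [← unitVal_mul, mul_inv_cancel, unitVal_one]
  exact left_ne_zero_of_mul_eq_one h

lemma logMapOT_one (σ : Fin s ⊕ (Fin t ⊕ Fin t) → (K →+* ℂ)) :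
    logMapOT σ (1 : (𝓞 K)ˣ) = 0 := by
  funext x
  cases x with
  | inl i => simp [logMapOT, unitVal_one]
  | inr k => simp [logMapOT, unitVal_one]

lemma logMapOT_mul (σ : Fin s ⊕ (Fin t ⊕ Fin t) → (K →+* ℂ))
    (hσre : ∀ (i : Fin s) (x : K), ((σ (Sum.inl i)) x).im = 0)
    (u v : (𝓞 K)ˣ) (hu : IsTotPos σ u) (hv : IsTotPos σ v) :
    logMapOT σ (u * v) = logMapOT σ u + logMapOT σ v := by
  funext x
  cases x with
  | inl i =>
    have him : ∀ w : (𝓞 K)ˣ, (unitVal (σ (Sum.inl i)) w).im = 0 := fun w => hσre i _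
    have : (unitVal (σ (Sum.inl i)) (u * v)).re
        = (unitVal (σ (Sum.inl i)) u).re * (unitVal (σ (Sum.inl i)) v).re := by
      rw [unitVal_mul, Complex.mul_re, him u, him v]; ring
    simp only [logMapOT, Sum.elim_inl, Pi.add_apply, this]
    exact Real.log_mul (hu i).ne' (hv i).ne'
  | inr k =>
    have h1 := unitVal_ne_zero (σ (Sum.inr (Sum.inl k))) u
    have h2 := unitVal_ne_zero (σ (Sum.inr (Sum.inl k))) v
    simp only [logMapOT, Sum.elim_inr, Pi.add_apply, unitVal_mul, norm_mul]
    rw [Real.log_mul (norm_ne_zero_iff.mpr h1) (norm_ne_zero_iff.mpr h2)]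
    ring

lemma eq_one_of_plMapOT_eq_zero (σ : Fin s ⊕ (Fin t ⊕ Fin t) → (K →+* ℂ))
    (hs : 1 ≤ s)
    (hσre : ∀ (i : Fin s) (x : K), ((σ (Sum.inl i)) x).im = 0)
    (u : (𝓞 K)ˣ) (hu : IsTotPos σ u) (h : plMapOT σ u = 0) : u = 1 := by
  set i : Fin s := ⟨0, hs⟩
  have h0 : Real.log (unitVal (σ (Sum.inl i)) u).re = 0 := congrFun h i
  have hre : (unitVal (σ (Sum.inl i)) u).re = 1 := by
    have := Real.exp_log (hu i)
    rw [h0, Real.exp_zero] at this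
    exact this.symm
  have hone : unitVal (σ (Sum.inl i)) u = 1 := by
    apply Complex.ext
    · simpa using hre
    · exact hσre i _
  have h2 : algebraMap (𝓞 K) K (u : 𝓞 K) = algebraMap (𝓞 K) K 1 := by
    apply (σ (Sum.inl i)).injective
    rw [map_one, map_one]
    exact hone
  exact Units.ext (NumberField.RingOfIntegers.coe_injective h2)

end AdmAux

open AdmAux in
/-- if `U ≤ O_K^{*,+}` is an admissible subgroup, then there exists an
`ℝ`-linear map `B : ℝ^s → ℝ^t` such that for every `a ∈ U` and every `1 ≤ k ≤ t` one has
`2 log|σ_{s+k}(a)| = B(log σ_1(a), …, log σ_s(a))_k`; equivalently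
`l(a) = (p(l(a)), B(p(l(a))))` for all `a ∈ U`. -/
theorem admissible_subgroup_log_image_lies_on_linear_graph
    (K : Type) [Field K] [NumberField K] (s t : ℕ) (hs : 1 ≤ s) (ht : 1 ≤ t)
    (σ : Fin s ⊕ (Fin t ⊕ Fin t) → (K →+* ℂ))
    (hdeg : Module.finrank ℚ K = s + 2 * t)
    (hσbij : Function.Bijective σ)
    (hσre : ∀ (i : Fin s) (x : K), ((σ (Sum.inl i)) x).im = 0)
    (hσnotre : ∀ k : Fin t, ∃ x : K, ((σ (Sum.inr (Sum.inl k))) x).im ≠ 0)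
    (hσconj : ∀ k : Fin t,
      σ (Sum.inr (Sum.inr k)) = (starRingEnd ℂ).comp (σ (Sum.inr (Sum.inl k))))
    (U : Subgroup (𝓞 K)ˣ)
    (hUpos : ∀ u ∈ U, IsTotPos σ u)
    (hUdisc : DiscreteTopology ↥(plMapOT σ '' (U : Set (𝓞 K)ˣ)))
    (hUspan : Submodule.span ℝ (plMapOT σ '' (U : Set (𝓞 K)ˣ)) = ⊤)
    :
    ∃ B : (Fin s → ℝ) →ₗ[ℝ] (Fin t → ℝ),
      (∀ u ∈ U, ∀ k : Fin t, logMapOT σ u (Sum.inr k) = B (plMapOT σ u) k) ∧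
      (∀ u ∈ U, logMapOT σ u = Sum.elim (plMapOT σ u) (B (plMapOT σ u))) := by
  classical
  -- the log map as a monoid hom on U
  have hpos : ∀ u : U, IsTotPos σ (u : (𝓞 K)ˣ) := fun u => hUpos u u.2
  let F : U →* Multiplicative ((Fin s ⊕ Fin t) → ℝ) :=
  { toFun := fun u => Multiplicative.ofAdd (logMapOT σ (u : (𝓞 K)ˣ))
    map_one' := by
      simp only [Subgroup.coe_one, logMapOT_one]
      rfl
    map_mul' := fun u v => by
      simp only [Subgroup.coe_mul]
      rw [logMapOT_mul σ hσre _ _ (hpos u) (hpos v)]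
      rfl }
  have hF : ∀ u : U, (F u).toAdd = logMapOT σ (u : (𝓞 K)ˣ) := fun u => rfl
  have hFzpow : ∀ (u : U) (n : ℤ),
      logMapOT σ ((u : (𝓞 K)ˣ) ^ n) = n • logMapOT σ (u : (𝓞 K)ˣ) := by
    intro u n
    have h : logMapOT σ (((u ^ n : U) : (𝓞 K)ˣ)) = n • logMapOT σ (u : (𝓞 K)ˣ) := by
      have h := congrArg Multiplicative.toAdd (map_zpow F u n)
      rw [toAdd_zpow] at h
      exact h
    rw [← SubgroupClass.coe_zpow]
    exact h
  -- the image as an integral lattice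
  let L : AddSubgroup (Fin s → ℝ) :=
  { carrier := plMapOT σ '' (U : Set (𝓞 K)ˣ)
    zero_mem' := ⟨1, one_mem U, by
      show plMapOT σ 1 = 0
      funext i; exact congrFun (logMapOT_one σ) (Sum.inl i)⟩
    add_mem' := by
      rintro _ _ ⟨a, ha, rfl⟩ ⟨b, hb, rfl⟩
      refine ⟨a * b, mul_mem ha hb, ?_⟩
      funext i
      exact congrFun (logMapOT_mul σ hσre a b (hUpos a ha) (hUpos b hb)) (Sum.inl i)
    neg_mem' := by
      rintro _ ⟨a, ha, rfl⟩
      refine ⟨a⁻¹, inv_mem ha, ?_⟩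
      have h := hFzpow ⟨a, ha⟩ (-1)
      funext i
      have := congrFun h (Sum.inl i)
      simpa [plMapOT] using this }
  let LZ : Submodule ℤ (Fin s → ℝ) := AddSubgroup.toIntSubmodule L
  haveI hdisc : DiscreteTopology LZ := hUdisc
  haveI : IsZLattice ℝ LZ := ⟨hUspan⟩
  haveI := ZLattice.module_free ℝ LZ
  haveI := ZLattice.module_finite ℝ LZ
  let ι := Module.Free.ChooseBasisIndex ℤ LZ
  let b0 : Module.Basis ι ℤ LZ := Module.Free.chooseBasis ℤ LZ
  let bE : Module.Basis ι ℝ (Fin s → ℝ) := b0.ofZLatticeBasis ℝ LZ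
  -- choose preimages
  have hchoice : ∀ i : ι, ∃ u : U, plMapOT σ (u : (𝓞 K)ˣ) = bE i := by
    intro i
    have : (b0 i : Fin s → ℝ) ∈ (plMapOT σ '' (U : Set (𝓞 K)ˣ)) := (b0 i).2
    obtain ⟨a, ha, hae⟩ := this
    exact ⟨⟨a, ha⟩, by rw [b0.ofZLatticeBasis_apply ℝ LZ i]; exact hae⟩
  choose uu huu using hchoice
  let B : (Fin s → ℝ) →ₗ[ℝ] (Fin t → ℝ) :=
    bE.constr ℝ (fun i => fun k => logMapOT σ ((uu i : (𝓞 K)ˣ)) (Sum.inr k))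
  have hB : ∀ i : ι, B (bE i) = fun k => logMapOT σ ((uu i : (𝓞 K)ˣ)) (Sum.inr k) :=
    fun i => bE.constr_basis ℝ _ i
  -- key claim
  have key : ∀ a : U, logMapOT σ (a : (𝓞 K)ˣ)
      = Sum.elim (plMapOT σ (a : (𝓞 K)ˣ)) (B (plMapOT σ (a : (𝓞 K)ˣ))) := by
    intro a
    set x : Fin s → ℝ := plMapOT σ (a : (𝓞 K)ˣ) with hxdef
    have hx : x ∈ LZ := ⟨(a : (𝓞 K)ˣ), a.2, rfl⟩
    let c : ι → ℤ := fun i => b0.repr ⟨x, hx⟩ i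
    have hrepr : ∀ i, bE.repr x i = (c i : ℝ) := by
      intro i
      exact b0.ofZLatticeBasis_repr_apply ℝ LZ ⟨x, hx⟩ i
    have hxsum : x = ∑ i, (c i : ℝ) • bE i := by
      conv_lhs => rw [← bE.sum_repr x]
      exact Finset.sum_congr rfl (fun i _ => by rw [hrepr i])
    -- the product element
    let w : U := ∏ i, (uu i) ^ (c i)
    have hlogw : logMapOT σ (w : (𝓞 K)ˣ)
        = ∑ i, (c i) • logMapOT σ ((uu i : (𝓞 K)ˣ)) := by
      have h := congrArg Multiplicative.toAdd (map_prod F (fun i => (uu i) ^ (c i)) Finset.univ)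
      rw [toAdd_prod] at h
      calc logMapOT σ (w : (𝓞 K)ˣ) = Multiplicative.toAdd (F w) := rfl
        _ = ∑ i, Multiplicative.toAdd (F ((uu i) ^ (c i))) := h
        _ = ∑ i, (c i) • logMapOT σ ((uu i : (𝓞 K)ˣ)) := by
            refine Finset.sum_congr rfl (fun i _ => ?_)
            have h2 := congrArg Multiplicative.toAdd (map_zpow F (uu i) (c i))
            rw [toAdd_zpow] at h2
            exact h2
    have hplw : plMapOT σ (w : (𝓞 K)ˣ) = x := by
      funext i
      have := congrFun hlogw (Sum.inl i)
      rw [hxsum]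
      show logMapOT σ (w : (𝓞 K)ˣ) (Sum.inl i) = _
      rw [this]
      simp only [Finset.sum_apply, Pi.smul_apply]
      refine Finset.sum_congr rfl (fun j _ => ?_)
      have hj := congrFun (huu j) i
      show (c j) • logMapOT σ ((uu j : (𝓞 K)ˣ)) (Sum.inl i) = (c j : ℝ) • bE j i
      rw [show logMapOT σ ((uu j : (𝓞 K)ˣ)) (Sum.inl i) = plMapOT σ ((uu j : (𝓞 K)ˣ)) i from rfl,
        hj]
      simp
    -- a = w
    have haw : (a : (𝓞 K)ˣ) = (w : (𝓞 K)ˣ) := by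
      have hpl : plMapOT σ ((a * w⁻¹ : U) : (𝓞 K)ˣ) = 0 := by
        have hmul := logMapOT_mul σ hσre (a : (𝓞 K)ˣ) ((w⁻¹ : U) : (𝓞 K)ˣ)
          (hpos a) (hpos w⁻¹)
        have hinv : logMapOT σ ((w⁻¹ : U) : (𝓞 K)ˣ) = - logMapOT σ (w : (𝓞 K)ˣ) := by
          have := hFzpow w (-1)
          simpa using this
        funext i
        show logMapOT σ ((a * w⁻¹ : U) : (𝓞 K)ˣ) (Sum.inl i) = 0
        have : ((a * w⁻¹ : U) : (𝓞 K)ˣ) = (a : (𝓞 K)ˣ) * ((w⁻¹ : U) : (𝓞 K)ˣ) := rfl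
        rw [this, hmul]
        have h1 := congrFun hinv (Sum.inl i)
        have h2 : logMapOT σ ((w:(𝓞 K)ˣ)) (Sum.inl i) = x i := congrFun hplw i
        have h3 : logMapOT σ ((a:(𝓞 K)ˣ)) (Sum.inl i) = x i := rfl
        simp only [Pi.add_apply, h1, h3]
        rw [show (- logMapOT σ (w : (𝓞 K)ˣ)) (Sum.inl i) = -(logMapOT σ (w : (𝓞 K)ˣ) (Sum.inl i)) from rfl, h2]
        ring
      have h5 := eq_one_of_plMapOT_eq_zero σ hs hσre _ (hpos (a * w⁻¹)) hpl
      have h4 : (a : (𝓞 K)ˣ) * ((w : (𝓞 K)ˣ))⁻¹ = 1 := by simpa using h5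
      exact mul_inv_eq_one.mp h4
    -- conclude
    have hlogaw : logMapOT σ (a : (𝓞 K)ˣ) = logMapOT σ (w : (𝓞 K)ˣ) := by rw [haw]
    have hBx : B x = ∑ i, (c i : ℝ) • (fun k => logMapOT σ ((uu i : (𝓞 K)ˣ)) (Sum.inr k)) := by
      rw [hxsum, map_sum]
      refine Finset.sum_congr rfl (fun i _ => ?_)
      rw [map_smul, hB i]
    funext z
    cases z with
    | inl i => rfl
    | inr k =>
      rw [Sum.elim_inr, hlogaw]
      have h1 := congrFun hlogw (Sum.inr k)
      rw [h1]
      have h2 := congrFun hBx k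
      rw [h2]
      simp only [Finset.sum_apply, Pi.smul_apply, zsmul_eq_mul, Pi.mul_apply,
        Pi.intCast_apply, smul_eq_mul]
  exact ⟨B, fun u hu k => congrFun (key ⟨u, hu⟩) (Sum.inr k), fun u hu => key ⟨u, hu⟩⟩
end
end

section
/- If U ≤ O_K^{*,+} is an admissible subgroup, then the action of U ⋉ O_K on H^s × ℂ^t is cocompact: there exists a compact set F ⊆ H^s × ℂ^t such that for every point x ∈ H^s × ℂ^t there exist a ∈ U and b ∈ O_K with g_{a,b}(x) ∈ F. -/
open NumberField

noncomputable section

/-- The value of an embedding `φ : K → ℂ` at an algebraic integer `b ∈ 𝓞 K`. -/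
def intVal {K : Type} [Field K] (φ : K →+* ℂ) (b : 𝓞 K) : ℂ :=
  φ (algebraMap (𝓞 K) K b)

/-- The affine map `g_{a,b} : ℂ^s × ℂ^t → ℂ^s × ℂ^t`,
`g_{a,b}(w,z) = (σ_1(a)w_1+σ_1(b), …, σ_s(a)w_s+σ_s(b),
σ_{s+1}(a)z_1+σ_{s+1}(b), …, σ_{s+t}(a)z_t+σ_{s+t}(b))`. -/
def gMap {K : Type} [Field K] {s t : ℕ}
    (σ : Fin s ⊕ (Fin t ⊕ Fin t) → (K →+* ℂ)) (a : (𝓞 K)ˣ) (b : 𝓞 K) :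
    (Fin s → ℂ) × (Fin t → ℂ) → (Fin s → ℂ) × (Fin t → ℂ) :=
  fun wz =>
    (fun i => unitVal (σ (Sum.inl i)) a * wz.1 i + intVal (σ (Sum.inl i)) b,
     fun k => unitVal (σ (Sum.inr (Sum.inl k))) a * wz.2 k
                + intVal (σ (Sum.inr (Sum.inl k))) b)

/-- The domain `H^s × ℂ^t ⊆ ℂ^s × ℂ^t`, where `H` is the upper half-plane. -/
def upperHalfProd (s t : ℕ) : Set ((Fin s → ℂ) × (Fin t → ℂ)) :=
  {wz | ∀ i : Fin s, 0 < (wz.1 i).im}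

theorem exists_addSubgroup_bound {E : Type*} [NormedAddCommGroup E] [NormedSpace ℝ E]
    [FiniteDimensional ℝ E] (G : AddSubgroup E)
    (h : Submodule.span ℝ (G : Set E) = ⊤) :
    ∃ r : ℝ, ∀ x : E, ∃ g ∈ G, ‖g + x‖ ≤ r := by
  obtain ⟨b, hbsub, hbspan, hbli⟩ := exists_linearIndependent ℝ (G : Set E)
  have hfin : b.Finite := hbli.setFinite
  haveI := hfin.fintype
  have hspan_top : ⊤ ≤ Submodule.span ℝ (Set.range ((↑) : b → E)) := by
    rw [Subtype.range_coe, hbspan, h]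
  let B : Module.Basis b ℝ E := Module.Basis.mk hbli hspan_top
  have hBmem : ∀ x : b, B x ∈ G := fun x => by
    rw [Module.Basis.mk_apply]; exact hbsub x.2
  obtain ⟨r, hr⟩ := (ZSpan.fundamentalDomain_isBounded B).subset_closedBall 0
  refine ⟨r, fun x => ?_⟩
  obtain ⟨v, hv, -⟩ := ZSpan.exist_unique_vadd_mem_fundamentalDomain B x
  have hvG : (v : E) ∈ G := by
    have hle : Submodule.span ℤ (Set.range B) ≤ AddSubgroup.toIntSubmodule G := by
      rw [Submodule.span_le]; rintro _ ⟨i, rfl⟩; exact hBmem i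
    exact hle v.2
  exact ⟨v, hvG, by simpa [mem_closedBall_zero_iff, Submodule.vadd_def] using hr hv⟩


def iotaOT {K : Type} [Field K] {s t : ℕ}
    (σ : Fin s ⊕ (Fin t ⊕ Fin t) → (K →+* ℂ)) (b : 𝓞 K) :
    (Fin s → ℝ) × (Fin t → ℂ) :=
  ((fun i => (σ (Sum.inl i) (algebraMap (𝓞 K) K b)).re),
   (fun k => σ (Sum.inr (Sum.inl k)) (algebraMap (𝓞 K) K b)))

theorem span_iotaOT {K : Type} [Field K] [NumberField K] {s t : ℕ}
    (σ : Fin s ⊕ (Fin t ⊕ Fin t) → (K →+* ℂ))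
    (hσbij : Function.Bijective σ)
    (hσre : ∀ (i : Fin s) (x : K), ((σ (Sum.inl i)) x).im = 0)
    (hσconj : ∀ k : Fin t,
      σ (Sum.inr (Sum.inr k)) = (starRingEnd ℂ).comp (σ (Sum.inr (Sum.inl k)))) :
    Submodule.span ℝ (Set.range (iotaOT σ)) = ⊤ := by
  rw [Submodule.eq_top_iff']
  intro v
  -- construct f
  set e := Equiv.ofBijective σ hσbij with he
  set f : (K →+* ℂ) → ℂ := fun φ =>
    Sum.elim (fun i => ((v.1 i : ℝ) : ℂ))
      (Sum.elim (fun k => v.2 k) (fun k => starRingEnd ℂ (v.2 k))) (e.symm φ) with hf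
  have hfσ : ∀ idx, f (σ idx) =
      Sum.elim (fun i => ((v.1 i : ℝ) : ℂ))
      (Sum.elim (fun k => v.2 k) (fun k => starRingEnd ℂ (v.2 k))) idx := by
    intro idx
    simp only [hf]
    congr 1
    exact e.symm_apply_apply idx
  set c := (canonicalEmbedding.latticeBasis K).repr f with hc
  set bb := fun j => RingOfIntegers.basis K j with hbb
  have hsum : ∀ φ : K →+* ℂ, f φ = ∑ j, c j * φ (algebraMap (𝓞 K) K (bb j)) := by
    intro φ
    conv_lhs => rw [← (canonicalEmbedding.latticeBasis K).sum_repr f]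
    rw [Finset.sum_apply]
    refine Finset.sum_congr rfl (fun j _ => ?_)
    rw [Pi.smul_apply, smul_eq_mul, canonicalEmbedding.latticeBasis_apply,
      integralBasis_apply, canonicalEmbedding.apply_at]
  have key : v = ∑ j, (c j).re • iotaOT σ (bb j) := by
    have h1 : ∀ i : Fin s, v.1 i = ∑ j, (c j).re * (σ (Sum.inl i) (algebraMap (𝓞 K) K (bb j))).re := by
      intro i
      have := hsum (σ (Sum.inl i))
      rw [hfσ (Sum.inl i)] at this
      have := congrArg Complex.re this
      simpa [Complex.mul_re, hσre i] using this
    have h2 : ∀ k : Fin t, v.2 k = ∑ j, ((c j).re : ℂ) * σ (Sum.inr (Sum.inl k)) (algebraMap (𝓞 K) K (bb j)) := by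
      intro k
      have hA := hsum (σ (Sum.inr (Sum.inl k)))
      rw [hfσ (Sum.inr (Sum.inl k))] at hA
      simp only [Sum.elim_inl, Sum.elim_inr] at hA
      have hB := hsum (σ (Sum.inr (Sum.inr k)))
      rw [hfσ (Sum.inr (Sum.inr k)), hσconj k] at hB
      simp only [Sum.elim_inl, Sum.elim_inr] at hB
      -- hB : conj (v.2 k) = ∑ c j * conj (σ' (bb j))
      have hB' : v.2 k = ∑ j, starRingEnd ℂ (c j) * σ (Sum.inr (Sum.inl k)) (algebraMap (𝓞 K) K (bb j)) := by
        have := congrArg (starRingEnd ℂ) hB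
        simpa [map_sum, mul_comm] using this
      have : (2 : ℂ) * v.2 k = ∑ j, (c j + starRingEnd ℂ (c j)) * σ (Sum.inr (Sum.inl k)) (algebraMap (𝓞 K) K (bb j)) := by
        rw [two_mul]
        nth_rewrite 1 [hA]
        rw [hB']
        rw [← Finset.sum_add_distrib]
        exact Finset.sum_congr rfl fun j _ => by ring
      have h2re : ∀ z : ℂ, z + starRingEnd ℂ z = 2 * (z.re : ℂ) := by
        intro z; rw [Complex.add_conj]; push_cast; ring
      rw [Finset.sum_congr rfl (fun j _ => by rw [h2re (c j), mul_assoc])] at this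
      rw [← Finset.mul_sum] at this
      exact mul_left_cancel₀ two_ne_zero this
    ext i
    · rw [h1 i, Prod.fst_sum, Finset.sum_apply]
      simp [iotaOT]
    · rw [h2 i, Prod.snd_sum, Finset.sum_apply]
      simp [iotaOT]
  rw [key]
  exact Submodule.sum_mem _ fun j _ =>
    Submodule.smul_mem _ _ (Submodule.subset_span ⟨bb j, rfl⟩)

/-- if `U ≤ O_K^{*,+}` is an admissible subgroup, then the action of
`U ⋉ O_K` on `H^s × ℂ^t` is cocompact: there is a compact set `F ⊆ H^s × ℂ^t` such that
every point `x ∈ H^s × ℂ^t` satisfies `g_{a,b}(x) ∈ F` for some `a ∈ U` and `b ∈ O_K`. -/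
theorem admissible_action_on_upperHalfProd_is_cocompact
    (K : Type) [Field K] [NumberField K] (s t : ℕ) (hs : 1 ≤ s) (ht : 1 ≤ t)
    (σ : Fin s ⊕ (Fin t ⊕ Fin t) → (K →+* ℂ))
    (hdeg : Module.finrank ℚ K = s + 2 * t)
    (hσbij : Function.Bijective σ)
    (hσre : ∀ (i : Fin s) (x : K), ((σ (Sum.inl i)) x).im = 0)
    (hσnotre : ∀ k : Fin t, ∃ x : K, ((σ (Sum.inr (Sum.inl k))) x).im ≠ 0)
    (hσconj : ∀ k : Fin t,
      σ (Sum.inr (Sum.inr k)) = (starRingEnd ℂ).comp (σ (Sum.inr (Sum.inl k))))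
    (U : Subgroup (𝓞 K)ˣ)
    (hUpos : ∀ u ∈ U, IsTotPos σ u)
    (hUdisc : DiscreteTopology ↥(plMapOT σ '' (U : Set (𝓞 K)ˣ)))
    (hUspan : Submodule.span ℝ (plMapOT σ '' (U : Set (𝓞 K)ˣ)) = ⊤)
    :
    ∃ F : Set ((Fin s → ℂ) × (Fin t → ℂ)),
      F ⊆ upperHalfProd s t ∧ IsCompact F ∧
      ∀ x ∈ upperHalfProd s t, ∃ a ∈ U, ∃ b : 𝓞 K, gMap σ a b x ∈ F := by
  classical
  -- basic facts about `unitVal` at the real embeddings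
  have him : ∀ (u : (𝓞 K)ˣ) (i : Fin s), (unitVal (σ (Sum.inl i)) u).im = 0 :=
    fun u i => hσre i _
  have hmul : ∀ (u v : (𝓞 K)ˣ) (i : Fin s),
      (unitVal (σ (Sum.inl i)) (u * v)).re
        = (unitVal (σ (Sum.inl i)) u).re * (unitVal (σ (Sum.inl i)) v).re := by
    intro u v i
    have h : unitVal (σ (Sum.inl i)) (u * v)
        = unitVal (σ (Sum.inl i)) u * unitVal (σ (Sum.inl i)) v := by
      simp [unitVal, Units.val_mul, map_mul]
    rw [h, Complex.mul_re, him, him]; ring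
  have hone : ∀ i : Fin s, (unitVal (σ (Sum.inl i)) 1).re = 1 := by
    intro i; simp [unitVal]
  have hinv : ∀ (u : (𝓞 K)ˣ) (i : Fin s), 0 < (unitVal (σ (Sum.inl i)) u).re →
      (unitVal (σ (Sum.inl i)) u⁻¹).re = ((unitVal (σ (Sum.inl i)) u).re)⁻¹ := by
    intro u i hpos
    have h := hmul u⁻¹ u i
    rw [inv_mul_cancel, hone] at h
    exact eq_inv_of_mul_eq_one_left h.symm
  -- the subgroup of `ℝ^s` given by `plMapOT σ '' U`
  set G₁ : AddSubgroup (Fin s → ℝ) :=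
    { carrier := plMapOT σ '' (U : Set (𝓞 K)ˣ)
      zero_mem' := ⟨1, U.one_mem, by
        funext i; simp [plMapOT, logMapOT, hone i]⟩
      add_mem' := by
        rintro _ _ ⟨u, hu, rfl⟩ ⟨v, hv, rfl⟩
        refine ⟨u * v, mul_mem hu hv, ?_⟩
        funext i
        simp only [plMapOT, logMapOT, Sum.elim_inl, Pi.add_apply]
        rw [hmul, Real.log_mul (ne_of_gt (hUpos u hu i)) (ne_of_gt (hUpos v hv i))]
      neg_mem' := by
        rintro _ ⟨u, hu, rfl⟩
        refine ⟨u⁻¹, inv_mem hu, ?_⟩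
        funext i
        simp only [plMapOT, logMapOT, Sum.elim_inl, Pi.neg_apply]
        rw [hinv u i (hUpos u hu i), Real.log_inv] } with hG₁
  -- the subgroup of `ℝ^s × ℂ^t` given by the image of `𝓞 K`
  set ιh : 𝓞 K →+ ((Fin s → ℝ) × (Fin t → ℂ)) :=
    { toFun := iotaOT σ
      map_zero' := by
        refine Prod.ext ?_ ?_ <;> funext j <;> simp [iotaOT]
      map_add' := by
        intro x y
        refine Prod.ext ?_ ?_ <;> funext j <;> simp [iotaOT, map_add, Complex.add_re] } with hιh
  obtain ⟨r₁, h₁⟩ := exists_addSubgroup_bound G₁ hUspan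
  obtain ⟨r₂, h₂⟩ := exists_addSubgroup_bound ιh.range (by
    rw [AddMonoidHom.coe_range]
    exact span_iotaOT σ hσbij hσre hσconj)
  refine ⟨{wz | (∀ i, |(wz.1 i).re| ≤ r₂ ∧
      (wz.1 i).im ∈ Set.Icc (Real.exp (-r₁)) (Real.exp r₁)) ∧
      ∀ k, ‖wz.2 k‖ ≤ r₂}, ?_, ?_, ?_⟩
  · -- contained in the upper half space
    intro wz hwz i
    exact lt_of_lt_of_le (Real.exp_pos _) (hwz.1 i).2.1
  · -- compactness
    have hclosed : IsClosed {wz : (Fin s → ℂ) × (Fin t → ℂ) |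
        (∀ i, |(wz.1 i).re| ≤ r₂ ∧
          (wz.1 i).im ∈ Set.Icc (Real.exp (-r₁)) (Real.exp r₁)) ∧
        ∀ k, ‖wz.2 k‖ ≤ r₂} := by
      have : {wz : (Fin s → ℂ) × (Fin t → ℂ) |
          (∀ i, |(wz.1 i).re| ≤ r₂ ∧
            (wz.1 i).im ∈ Set.Icc (Real.exp (-r₁)) (Real.exp r₁)) ∧
          ∀ k, ‖wz.2 k‖ ≤ r₂}
          = (⋂ i, {wz : (Fin s → ℂ) × (Fin t → ℂ) | |(wz.1 i).re| ≤ r₂}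
              ∩ {wz | Real.exp (-r₁) ≤ (wz.1 i).im}
              ∩ {wz | (wz.1 i).im ≤ Real.exp r₁})
            ∩ ⋂ k, {wz : (Fin s → ℂ) × (Fin t → ℂ) | ‖wz.2 k‖ ≤ r₂} := by
        ext wz
        simp only [Set.mem_setOf_eq, Set.mem_inter_iff, Set.mem_iInter, Set.mem_Icc]
        exact ⟨fun h => ⟨fun i => ⟨⟨(h.1 i).1, (h.1 i).2.1⟩, (h.1 i).2.2⟩, h.2⟩,
          fun h => ⟨fun i => ⟨(h.1 i).1.1, (h.1 i).1.2, (h.1 i).2⟩, h.2⟩⟩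
      rw [this]
      have c₁ : ∀ i : Fin s, Continuous fun wz : (Fin s → ℂ) × (Fin t → ℂ) => wz.1 i :=
        fun i => (continuous_apply i).comp continuous_fst
      have c₂ : ∀ k : Fin t, Continuous fun wz : (Fin s → ℂ) × (Fin t → ℂ) => wz.2 k :=
        fun k => (continuous_apply k).comp continuous_snd
      refine IsClosed.inter (isClosed_iInter fun i => ?_) (isClosed_iInter fun k => ?_)
      · exact ((isClosed_le (continuous_abs.comp (Complex.continuous_re.comp (c₁ i)))
            continuous_const).inter
          (isClosed_le continuous_const (Complex.continuous_im.comp (c₁ i)))).inter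
          (isClosed_le (Complex.continuous_im.comp (c₁ i)) continuous_const)
      · exact isClosed_le (continuous_norm.comp (c₂ k)) continuous_const
    have hbig : IsCompact ((Set.univ.pi fun _ : Fin s =>
          Metric.closedBall (0 : ℂ) (r₂ + Real.exp r₁)) ×ˢ
        (Set.univ.pi fun _ : Fin t => Metric.closedBall (0 : ℂ) r₂)) :=
      IsCompact.prod
        (isCompact_univ_pi fun _ : Fin s =>
          isCompact_closedBall (0 : ℂ) (r₂ + Real.exp r₁))
        (isCompact_univ_pi fun _ : Fin t => isCompact_closedBall (0 : ℂ) r₂)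
    refine hbig.of_isClosed_subset hclosed ?_
    rintro ⟨w, z⟩ hwz
    constructor
    · intro i _
      rw [mem_closedBall_zero_iff]
      calc ‖w i‖ ≤ |(w i).re| + |(w i).im| :=
            Complex.norm_le_abs_re_add_abs_im _
        _ ≤ r₂ + Real.exp r₁ := by
            have h := hwz.1 i
            have him' : |(w i).im| ≤ Real.exp r₁ := by
              rw [abs_le]
              exact ⟨le_trans (by linarith [Real.exp_pos (-r₁), Real.exp_pos r₁]) h.2.1, h.2.2⟩
            exact add_le_add h.1 him'
    · intro k _
      rw [mem_closedBall_zero_iff]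
      exact hwz.2 k
  · -- every orbit meets F
    rintro ⟨w, z⟩ hx
    have hy : ∀ i, 0 < (w i).im := hx
    obtain ⟨g, hgG, hgb⟩ := h₁ (fun i => Real.log ((w i).im))
    obtain ⟨a, haU, rfl⟩ := hgG
    have hpa : ∀ i, 0 < (unitVal (σ (Sum.inl i)) a).re := hUpos a haU
    set P : (Fin s → ℝ) × (Fin t → ℂ) :=
      ((fun i => (unitVal (σ (Sum.inl i)) a * w i).re),
       (fun k => unitVal (σ (Sum.inr (Sum.inl k))) a * z k)) with hP
    obtain ⟨m, hmG, hmb⟩ := h₂ P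
    obtain ⟨b, rfl⟩ := hmG
    refine ⟨a, haU, b, ?_, ?_⟩
    · -- conditions on the `w`-components
      intro i
      simp only [gMap]
      constructor
      · -- bound on the real part
        have e1 : (unitVal (σ (Sum.inl i)) a * w i + intVal (σ (Sum.inl i)) b).re
            = (ιh b + P).1 i := by
          simp [hιh, iotaOT, hP, intVal, Complex.add_re, add_comm]
        rw [e1, ← Real.norm_eq_abs]
        exact le_trans (le_trans (norm_le_pi_norm _ i) (norm_fst_le _)) hmb
      · -- bound on the imaginary part
        have e2 : (unitVal (σ (Sum.inl i)) a * w i + intVal (σ (Sum.inl i)) b).im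
            = (unitVal (σ (Sum.inl i)) a).re * (w i).im := by
          have hb0 : (intVal (σ (Sum.inl i)) b).im = 0 := hσre i _
          rw [Complex.add_im, Complex.mul_im, him a i, hb0]
          ring
        rw [e2]
        have hlog : |Real.log ((unitVal (σ (Sum.inl i)) a).re * (w i).im)| ≤ r₁ := by
          rw [Real.log_mul (ne_of_gt (hpa i)) (ne_of_gt (hy i)), ← Real.norm_eq_abs]
          have : Real.log (unitVal (σ (Sum.inl i)) a).re + Real.log ((w i).im)
              = (plMapOT σ a + fun i => Real.log ((w i).im)) i := by
            simp [plMapOT, logMapOT]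
          rw [this]
          exact le_trans (norm_le_pi_norm _ i) hgb
        have hppos : 0 < (unitVal (σ (Sum.inl i)) a).re * (w i).im :=
          mul_pos (hpa i) (hy i)
        rw [abs_le] at hlog
        constructor
        · calc Real.exp (-r₁) ≤ Real.exp (Real.log _) := Real.exp_le_exp.mpr hlog.1
            _ = _ := Real.exp_log hppos
        · calc (unitVal (σ (Sum.inl i)) a).re * (w i).im
              = Real.exp (Real.log _) := (Real.exp_log hppos).symm
            _ ≤ Real.exp r₁ := Real.exp_le_exp.mpr hlog.2
    · -- conditions on the `z`-components
      intro k
      simp only [gMap]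
      have e3 : unitVal (σ (Sum.inr (Sum.inl k))) a * z k + intVal (σ (Sum.inr (Sum.inl k))) b
          = (ιh b + P).2 k := by
        simp [hιh, iotaOT, hP, intVal, add_comm]
      rw [e3]
      exact le_trans (le_trans (norm_le_pi_norm _ k) (norm_snd_le _)) hmb
end
end

section
/- If U ≤ O_K^{*,+} is an admissible subgroup, then the action of U ⋉ O_K on H^s × ℂ^t is free and properly discontinuous: (i) if a ∈ U, b ∈ O_K and g_{a,b}(x) = x for some x ∈ H^s × ℂ^t, then a = 1 and b = 0; (ii) for every compact set C ⊆ H^s × ℂ^t, the set {(a,b) ∈ U × O_K : g_{a,b}(C) ∩ C ≠ ∅} is finite. -/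
open NumberField

noncomputable section

/-- if `U ≤ O_K^{*,+}` is an admissible subgroup, then the action of
`U ⋉ O_K` on `H^s × ℂ^t` is free and properly discontinuous:
(i) if `g_{a,b}` fixes a point of `H^s × ℂ^t` with `a ∈ U`, `b ∈ O_K`, then `a = 1` and
`b = 0`; (ii) for every compact `C ⊆ H^s × ℂ^t` only finitely many `(a,b) ∈ U × O_K`
satisfy `g_{a,b}(C) ∩ C ≠ ∅`. -/
theorem admissible_action_on_upperHalfProd_is_free_and_properly_discontinuous
    (K : Type) [Field K] [NumberField K] (s t : ℕ) (hs : 1 ≤ s) (ht : 1 ≤ t)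
    (σ : Fin s ⊕ (Fin t ⊕ Fin t) → (K →+* ℂ))
    (hdeg : Module.finrank ℚ K = s + 2 * t)
    (hσbij : Function.Bijective σ)
    (hσre : ∀ (i : Fin s) (x : K), ((σ (Sum.inl i)) x).im = 0)
    (hσnotre : ∀ k : Fin t, ∃ x : K, ((σ (Sum.inr (Sum.inl k))) x).im ≠ 0)
    (hσconj : ∀ k : Fin t,
      σ (Sum.inr (Sum.inr k)) = (starRingEnd ℂ).comp (σ (Sum.inr (Sum.inl k))))
    (U : Subgroup (𝓞 K)ˣ)
    (hUpos : ∀ u ∈ U, IsTotPos σ u)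
    (hUdisc : DiscreteTopology ↥(plMapOT σ '' (U : Set (𝓞 K)ˣ)))
    (hUspan : Submodule.span ℝ (plMapOT σ '' (U : Set (𝓞 K)ˣ)) = ⊤)
    :
    (∀ a ∈ U, ∀ b : 𝓞 K, ∀ x ∈ upperHalfProd s t, gMap σ a b x = x → a = 1 ∧ b = 0) ∧
    (∀ C : Set ((Fin s → ℂ) × (Fin t → ℂ)), C ⊆ upperHalfProd s t → IsCompact C →
      {p : (𝓞 K)ˣ × 𝓞 K | p.1 ∈ U ∧ (gMap σ p.1 p.2 '' C ∩ C).Nonempty}.Finite) := by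
  have i0 : Fin s := ⟨0, hs⟩
  -- imaginary parts of real-embedding values of units and integers vanish
  have hAim : ∀ (i : Fin s) (a : (𝓞 K)ˣ), (unitVal (σ (Sum.inl i)) a).im = 0 :=
    fun i a => hσre i _
  have hBim : ∀ (i : Fin s) (b : 𝓞 K), (intVal (σ (Sum.inl i)) b).im = 0 :=
    fun i b => hσre i _
  -- imaginary part of the i-th real coordinate of gMap
  have hgim : ∀ (a : (𝓞 K)ˣ) (b : 𝓞 K) (x : (Fin s → ℂ) × (Fin t → ℂ)) (i : Fin s),
      ((gMap σ a b x).1 i).im = (unitVal (σ (Sum.inl i)) a).re * (x.1 i).im := by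
    intro a b x i
    simp [gMap, Complex.add_im, Complex.mul_im, hAim, hBim]
  constructor
  · -- part (i): freeness
    intro a _ b x hx hfix
    have h1 : unitVal (σ (Sum.inl i0)) a * x.1 i0 + intVal (σ (Sum.inl i0)) b = x.1 i0 :=
      congrFun (congrArg Prod.fst hfix) i0
    have him : (unitVal (σ (Sum.inl i0)) a).re * (x.1 i0).im = (x.1 i0).im := by
      have := (hgim a b x i0).symm.trans (congrArg Complex.im (congrFun (congrArg Prod.fst hfix) i0))
      exact this
    have hxim : (x.1 i0).im ≠ 0 := ne_of_gt (hx i0)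
    have hAre : (unitVal (σ (Sum.inl i0)) a).re = 1 :=
      mul_right_cancel₀ hxim (him.trans (one_mul _).symm)
    have hA1 : unitVal (σ (Sum.inl i0)) a = 1 := Complex.ext (by simp [hAre]) (by simp [hAim])
    have ha1 : a = 1 := by
      apply Units.ext
      apply RingOfIntegers.coe_injective
      apply (σ (Sum.inl i0)).injective
      simpa [unitVal] using hA1
    refine ⟨ha1, ?_⟩
    have hB0 : intVal (σ (Sum.inl i0)) b = 0 := by
      have := h1
      rw [hA1, one_mul] at this
      linear_combination this
    apply RingOfIntegers.coe_injective
    apply (σ (Sum.inl i0)).injective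
    simpa [intVal] using hB0
  · -- part (ii): proper discontinuity
    intro C hC hCcomp
    rcases C.eq_empty_or_nonempty with rfl | hCne
    · simp
    -- norm bound on C
    obtain ⟨R0, hR0⟩ := hCcomp.isBounded.subset_closedBall 0
    -- lower bound on imaginary parts on C
    have hmi : ∀ i : Fin s, ∃ mi, 0 < mi ∧ ∀ x ∈ C, mi ≤ (x.1 i).im := by
      intro i
      have hcont : ContinuousOn (fun x : (Fin s → ℂ) × (Fin t → ℂ) => (x.1 i).im) C := by
        fun_prop
      obtain ⟨x0, hx0C, hx0⟩ := hCcomp.exists_isMinOn hCne hcont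
      exact ⟨(x0.1 i).im, hC hx0C i, fun x hx => hx0 hx⟩
    choose mi hmi0 hmile using hmi
    have hFinsne : (Finset.univ : Finset (Fin s)).Nonempty := ⟨i0, Finset.mem_univ _⟩
    set m : ℝ := Finset.univ.inf' hFinsne mi with hm
    have hm0 : 0 < m := (Finset.lt_inf'_iff hFinsne).2 fun i _ => hmi0 i
    have hmle : ∀ x ∈ C, ∀ i, m ≤ (x.1 i).im := fun x hx i =>
      le_trans (Finset.inf'_le _ (Finset.mem_univ i)) (hmile i x hx)
    set R : ℝ := max R0 m with hRdef
    have hmR : m ≤ R := le_max_right _ _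
    have hR0' : 0 < R := lt_of_lt_of_le hm0 hmR
    have hnorm : ∀ x ∈ C, (∀ i, ‖x.1 i‖ ≤ R) ∧ (∀ k, ‖x.2 k‖ ≤ R) := by
      intro x hx
      have hxR : ‖x‖ ≤ R := le_trans (mem_closedBall_zero_iff.1 (hR0 hx)) (le_max_left _ _)
      constructor
      · intro i
        exact le_trans (le_trans (norm_le_pi_norm x.1 i) (norm_fst_le x)) hxR
      · intro k
        exact le_trans (le_trans (norm_le_pi_norm x.2 k) (norm_snd_le x)) hxR
    have himle : ∀ x ∈ C, ∀ i, (x.1 i).im ≤ R := by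
      intro x hx i
      calc (x.1 i).im ≤ |(x.1 i).im| := le_abs_self _
        _ ≤ ‖x.1 i‖ := Complex.abs_im_le_norm _
        _ ≤ R := (hnorm x hx).1 i
    -- key real-part bounds for relevant units
    have hkey : ∀ a : (𝓞 K)ˣ, a ∈ U → ∀ b : 𝓞 K, ∀ x ∈ C, gMap σ a b x ∈ C →
        ∀ i : Fin s, m / R ≤ (unitVal (σ (Sum.inl i)) a).re ∧
          (unitVal (σ (Sum.inl i)) a).re ≤ R / m := by
      intro a haU b x hxC hgC i
      have hApos : 0 < (unitVal (σ (Sum.inl i)) a).re := hUpos a haU i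
      have h1 : m ≤ (unitVal (σ (Sum.inl i)) a).re * (x.1 i).im := by
        rw [← hgim a b x i]; exact hmle _ hgC i
      have h2 : (unitVal (σ (Sum.inl i)) a).re * (x.1 i).im ≤ R := by
        rw [← hgim a b x i]; exact himle _ hgC i
      constructor
      · rw [div_le_iff₀ hR0']
        calc m ≤ (unitVal (σ (Sum.inl i)) a).re * (x.1 i).im := h1
          _ ≤ (unitVal (σ (Sum.inl i)) a).re * R :=
            mul_le_mul_of_nonneg_left (himle x hxC i) hApos.le
      · rw [le_div_iff₀ hm0]
        calc (unitVal (σ (Sum.inl i)) a).re * m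
            ≤ (unitVal (σ (Sum.inl i)) a).re * (x.1 i).im :=
              mul_le_mul_of_nonneg_left (hmle x hxC i) hApos.le
          _ ≤ R := h2
    -- the set of relevant units
    set Aset : Set (𝓞 K)ˣ :=
      {a | a ∈ U ∧ ∃ b : 𝓞 K, ∃ x ∈ C, gMap σ a b x ∈ C} with hAsetdef
    -- plMapOT is additive on U
    have hval : ∀ (u v : (𝓞 K)ˣ) (i : Fin s),
        unitVal (σ (Sum.inl i)) (u * v)
          = unitVal (σ (Sum.inl i)) u * unitVal (σ (Sum.inl i)) v := by
      intro u v i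
      simp [unitVal, Units.val_mul, map_mul]
    have hre : ∀ (u v : (𝓞 K)ˣ) (i : Fin s),
        (unitVal (σ (Sum.inl i)) (u * v)).re
          = (unitVal (σ (Sum.inl i)) u).re * (unitVal (σ (Sum.inl i)) v).re := by
      intro u v i
      rw [hval, Complex.mul_re, hAim, hAim]
      ring
    have hmul : ∀ u ∈ U, ∀ v ∈ U, plMapOT σ (u * v) = plMapOT σ u + plMapOT σ v := by
      intro u hu v hv
      funext i
      have h1 : (unitVal (σ (Sum.inl i)) u).re ≠ 0 := (hUpos u hu i).ne'
      have h2 : (unitVal (σ (Sum.inl i)) v).re ≠ 0 := (hUpos v hv i).ne'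
      simp [plMapOT, logMapOT, hre, Real.log_mul h1 h2]
    have hone : plMapOT σ (1 : (𝓞 K)ˣ) = 0 := by
      funext i
      simp [plMapOT, logMapOT, unitVal]
    -- the image as an additive subgroup
    set L : AddSubgroup (Fin s → ℝ) :=
      { carrier := plMapOT σ '' (U : Set (𝓞 K)ˣ)
        zero_mem' := ⟨1, U.one_mem, hone⟩
        add_mem' := by
          rintro _ _ ⟨u, hu, rfl⟩ ⟨v, hv, rfl⟩
          exact ⟨u * v, U.mul_mem hu hv, hmul u hu v hv⟩
        neg_mem' := by
          rintro _ ⟨u, hu, rfl⟩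
          refine ⟨u⁻¹, U.inv_mem hu, ?_⟩
          have h := hmul u⁻¹ (U.inv_mem hu) u hu
          rw [inv_mul_cancel, hone] at h
          exact (neg_eq_of_add_eq_zero_left h.symm).symm
          } with hLdef
    haveI hLdisc : DiscreteTopology (L : Set (Fin s → ℝ)) := hUdisc
    have hLclosed : IsClosed (L : Set (Fin s → ℝ)) := AddSubgroup.isClosed_of_discrete
    set r : ℝ := Real.log (R / m) with hrdef
    have hr0 : 0 ≤ r := Real.log_nonneg ((one_le_div hm0).2 hmR)
    have hFinInter :
        ((plMapOT σ '' (U : Set (𝓞 K)ˣ)) ∩ Metric.closedBall 0 r).Finite := by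
      have hcpt : IsCompact ((L : Set (Fin s → ℝ)) ∩ Metric.closedBall 0 r) :=
        (isCompact_closedBall 0 r).inter_left hLclosed
      have hdisc : DiscreteTopology ↥((L : Set (Fin s → ℝ)) ∩ Metric.closedBall 0 r) :=
        DiscreteTopology.of_subset hLdisc Set.inter_subset_left
      exact hcpt.finite (isDiscrete_iff_discreteTopology.mpr hdisc)
    have hple : ∀ (w : (𝓞 K)ˣ) (i : Fin s),
        plMapOT σ w i = Real.log (unitVal (σ (Sum.inl i)) w).re := fun _ _ => rfl
    have hAsub : plMapOT σ '' Aset ⊆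
        (plMapOT σ '' (U : Set (𝓞 K)ˣ)) ∩ Metric.closedBall 0 r := by
      rintro _ ⟨a, ⟨haU, b, x, hxC, hgC⟩, rfl⟩
      refine ⟨⟨a, haU, rfl⟩, ?_⟩
      rw [Metric.mem_closedBall, dist_zero_right, pi_norm_le_iff_of_nonneg hr0]
      intro i
      obtain ⟨h1, h2⟩ := hkey a haU b x hxC hgC i
      have hApos := hUpos a haU i
      rw [Real.norm_eq_abs, abs_le, hple]
      constructor
      · have hlow : Real.log (m / R) ≤ Real.log (unitVal (σ (Sum.inl i)) a).re :=
          Real.log_le_log (div_pos hm0 hR0') h1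
        have : Real.log (m / R) = -r := by
          rw [hrdef, ← Real.log_inv, inv_div]
        linarith
      · exact Real.log_le_log hApos h2
    have hinjU : Set.InjOn (plMapOT σ) (U : Set (𝓞 K)ˣ) := by
      intro u hu v hv h
      have h0 := congrFun h i0
      rw [hple, hple] at h0
      have hu0 := hUpos u hu i0
      have hv0 := hUpos v hv i0
      have hree : (unitVal (σ (Sum.inl i0)) u).re = (unitVal (σ (Sum.inl i0)) v).re := by
        have := congrArg Real.exp h0
        rwa [Real.exp_log hu0, Real.exp_log hv0] at this
      have hCeq : unitVal (σ (Sum.inl i0)) u = unitVal (σ (Sum.inl i0)) v :=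
        Complex.ext hree (by rw [hAim, hAim])
      exact Units.ext (RingOfIntegers.coe_injective ((σ (Sum.inl i0)).injective hCeq))
    have hAfin : Aset.Finite :=
      Set.Finite.of_finite_image (hFinInter.subset hAsub)
        (hinjU.mono fun a ha => ha.1)
    -- finiteness of the fibers in b
    have hFib : ∀ a : (𝓞 K)ˣ, {b : 𝓞 K | ∃ x ∈ C, gMap σ a b x ∈ C}.Finite := by
      intro a
      have hne : (Finset.univ : Finset (Fin s ⊕ (Fin t ⊕ Fin t))).Nonempty :=
        ⟨Sum.inl i0, Finset.mem_univ _⟩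
      set M : ℝ := Finset.univ.sup' hne (fun j => ‖unitVal (σ j) a‖) with hMdef
      have hM0 : ∀ j, ‖unitVal (σ j) a‖ ≤ M :=
        fun j => Finset.le_sup' (fun j => ‖unitVal (σ j) a‖) (Finset.mem_univ j)
      set Ba : ℝ := R + M * R with hBadef
      have est : ∀ (A W G : ℂ), ‖A‖ ≤ M → ‖W‖ ≤ R → ‖G‖ ≤ R →
          ‖G - A * W‖ ≤ Ba := by
        intro A W G hA hW hG
        calc ‖G - A * W‖ ≤ ‖G‖ + ‖A * W‖ := norm_sub_le _ _
          _ ≤ R + M * R := by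
              rw [norm_mul]
              exact add_le_add hG (mul_le_mul hA hW (norm_nonneg _)
                (le_trans (norm_nonneg _) (hM0 (Sum.inl i0))))
          _ = Ba := rfl
      have hbound : ∀ b ∈ {b : 𝓞 K | ∃ x ∈ C, gMap σ a b x ∈ C},
          ∀ φ : K →+* ℂ, ‖φ (algebraMap (𝓞 K) K b)‖ ≤ Ba := by
        rintro b ⟨x, hxC, hgC⟩ φ
        obtain ⟨j, rfl⟩ := hσbij.2 φ
        have hcase2 : ∀ k : Fin t,
            ‖(σ (Sum.inr (Sum.inl k))) (algebraMap (𝓞 K) K b)‖ ≤ Ba := by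
          intro k
          have he : (σ (Sum.inr (Sum.inl k))) (algebraMap (𝓞 K) K b)
              = (gMap σ a b x).2 k - unitVal (σ (Sum.inr (Sum.inl k))) a * x.2 k := by
            simp [gMap, intVal]
          rw [he]
          exact est _ _ _ (hM0 _) ((hnorm x hxC).2 k) ((hnorm _ hgC).2 k)
        match j with
        | Sum.inl i =>
          have he : (σ (Sum.inl i)) (algebraMap (𝓞 K) K b)
              = (gMap σ a b x).1 i - unitVal (σ (Sum.inl i)) a * x.1 i := by
            simp [gMap, intVal]
          rw [he]
          exact est _ _ _ (hM0 _) ((hnorm x hxC).1 i) ((hnorm _ hgC).1 i)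
        | Sum.inr (Sum.inl k) => exact hcase2 k
        | Sum.inr (Sum.inr k) =>
          rw [hσconj k]
          have : ‖((starRingEnd ℂ).comp (σ (Sum.inr (Sum.inl k)))) (algebraMap (𝓞 K) K b)‖
              = ‖(σ (Sum.inr (Sum.inl k))) (algebraMap (𝓞 K) K b)‖ := by
            simp [RingHom.comp_apply]
          rw [this]
          exact hcase2 k
      have hsubb : {b : 𝓞 K | ∃ x ∈ C, gMap σ a b x ∈ C} ⊆
          (algebraMap (𝓞 K) K) ⁻¹' {x : K | IsIntegral ℤ x ∧ ∀ φ : K →+* ℂ, ‖φ x‖ ≤ Ba} :=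
        fun b hb => ⟨RingOfIntegers.isIntegral_coe b, hbound b hb⟩
      exact Set.Finite.subset (Set.Finite.preimage RingOfIntegers.coe_injective.injOn
        (Embeddings.finite_of_norm_le K ℂ Ba)) hsubb
    -- assemble
    have hsub : {p : (𝓞 K)ˣ × 𝓞 K | p.1 ∈ U ∧ (gMap σ p.1 p.2 '' C ∩ C).Nonempty} ⊆
        ⋃ a ∈ Aset, {a} ×ˢ {b : 𝓞 K | ∃ x ∈ C, gMap σ a b x ∈ C} := by
      rintro ⟨a, b⟩ ⟨haU, y, ⟨x, hxC, rfl⟩, hyC⟩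
      simp only [Set.mem_iUnion]
      exact ⟨a, ⟨haU, b, x, hxC, hyC⟩, ⟨rfl, ⟨x, hxC, hyC⟩⟩⟩
    exact Set.Finite.subset
      (hAfin.biUnion fun a _ => (Set.finite_singleton a).prod (hFib a)) hsub
end
end

section
/- Let Λ be a full lattice in ℝ^n and Δ a full lattice in the real vector space ℝ^n × ℂ^m. If φ(λ)(Δ) ⊆ Δ for every λ ∈ Λ, then Σ_{i=1}^n x_i + 2 Σ_{k=1}^m Re ψ_k(x) = 0 for every x ∈ ℝ^n; equivalently exp(Σ_{i=1}^n x_i + Σ_{k=1}^m ψ_k(x) + Σ_{k=1}^m conj(ψ_k(x))) = 1 for every x ∈ ℝ^n. -/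
noncomputable section

open Submodule MeasureTheory ZSpan

private lemma det_prodMapR {M N : Type*} [AddCommGroup M] [Module ℝ M] [AddCommGroup N]
    [Module ℝ N] [FiniteDimensional ℝ M] [FiniteDimensional ℝ N]
    (f : M →ₗ[ℝ] M) (g : N →ₗ[ℝ] N) :
    LinearMap.det (f.prodMap g) = LinearMap.det f * LinearMap.det g := by
  classical
  let b := Module.finBasis ℝ M
  let c := Module.finBasis ℝ N
  rw [← LinearMap.det_toMatrix (b.prod c), LinearMap.toMatrix_prodMap,
    Matrix.det_fromBlocks_zero₁₂, LinearMap.det_toMatrix, LinearMap.det_toMatrix]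

private def diagC {m : ℕ} (c : Fin m → ℂ) : (Fin m → ℂ) →ₗ[ℝ] (Fin m → ℂ) :=
  LinearMap.pi fun k => (Algebra.lmul ℝ ℂ (c k)).comp (LinearMap.proj k)

private def piSuccEquivC (m : ℕ) : (Fin (m + 1) → ℂ) ≃ₗ[ℝ] ℂ × (Fin m → ℂ) :=
  { (Fin.consEquiv (fun _ : Fin (m + 1) => ℂ)).symm with
    map_add' := fun _ _ => rfl
    map_smul' := fun _ _ => rfl }

private lemma det_diagC : ∀ (m : ℕ) (c : Fin m → ℂ),
    LinearMap.det (diagC c) = ∏ k, Complex.normSq (c k)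
  | 0, c => by
    simp [LinearMap.det_eq_one_of_subsingleton]
  | (m + 1), c => by
    have h : diagC c =
        ((piSuccEquivC m).symm.toLinearMap.comp
          (((Algebra.lmul ℝ ℂ (c 0)).prodMap (diagC (fun k => c k.succ))).comp
            (piSuccEquivC m).symm.symm.toLinearMap)) := by
      apply LinearMap.ext; intro v
      refine funext fun i => ?_
      refine Fin.cases ?_ (fun j => ?_) i <;> rfl
    rw [h, LinearMap.det_conj _ (piSuccEquivC m).symm, det_prodMapR,
      det_diagC m (fun k => c k.succ), Fin.prod_univ_succ, ← Algebra.norm_complex_apply,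
      Algebra.norm_apply]


private def diagR {n : ℕ} (c : Fin n → ℝ) : (Fin n → ℝ) →ₗ[ℝ] (Fin n → ℝ) :=
  LinearMap.pi fun i => c i • LinearMap.proj i

private lemma det_diagR {n : ℕ} (c : Fin n → ℝ) :
    LinearMap.det (diagR c) = ∏ i, c i := by
  classical
  rw [← LinearMap.det_toMatrix' , show LinearMap.toMatrix' (diagR c) = Matrix.diagonal c from ?_,
    Matrix.det_diagonal]
  ext i j
  simp [LinearMap.toMatrix'_apply, diagR, Matrix.diagonal, Pi.single_apply, eq_comm]

private lemma abs_det_eq_one_of_maps_lattice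
    {E : Type*} [NormedAddCommGroup E] [NormedSpace ℝ E] [FiniteDimensional ℝ E]
    [MeasurableSpace E] [BorelSpace E] (μ : Measure E) [μ.IsAddHaarMeasure]
    (L : Submodule ℤ E) [DiscreteTopology L] [IsZLattice ℝ L]
    (e : E ≃ₗ[ℝ] E) (he : Submodule.map (e.toLinearMap.restrictScalars ℤ) L = L) :
    |LinearMap.det (e : E →ₗ[ℝ] E)| = 1 := by
  classical
  haveI := ZLattice.module_free ℝ L
  haveI := ZLattice.module_finite ℝ L
  let b := Module.Free.chooseBasis ℤ L
  let b' := b.ofZLatticeBasis ℝ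
  have hspan : span ℤ (Set.range b') = L := b.ofZLatticeBasis_span ℝ
  let b'' := b'.map e
  have hspan'' : span ℤ (Set.range b'') = L := by
    have hr : Set.range ⇑b'' = ⇑e '' Set.range ⇑b' := by
      simp only [b'', Module.Basis.coe_map]
      exact (Set.range_comp _ _)
    rw [hr, show ⇑e '' Set.range ⇑b' = ⇑(e.toLinearMap.restrictScalars ℤ) '' Set.range ⇑b' from rfl,
      ← Submodule.map_span, hspan, he]
  have h1 := ZSpan.isAddFundamentalDomain b' μ
  have h2 := ZSpan.isAddFundamentalDomain b'' μ
  rw [hspan''] at h2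
  rw [hspan] at h1
  haveI : Countable ↥L := inferInstance
  haveI : VAddInvariantMeasure ↥L E μ :=
    (inferInstance : VAddInvariantMeasure L.toAddSubgroup E μ)
  haveI : MeasurableVAdd ↥L E := (inferInstance : MeasurableVAdd L.toAddSubgroup E)
  have hm : μ (fundamentalDomain b') = μ (fundamentalDomain b'') := h1.measure_eq h2
  have himg : ⇑e '' fundamentalDomain b' = fundamentalDomain b'' := map_fundamentalDomain b' e
  have himg2 : μ (⇑e '' fundamentalDomain b')
      = ENNReal.ofReal |LinearMap.det (e : E →ₗ[ℝ] E)| * μ (fundamentalDomain b') :=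
    μ.addHaar_image_linearMap _ _
  rw [himg, ← hm] at himg2
  have h0 : μ (fundamentalDomain b') ≠ 0 := measure_fundamentalDomain_ne_zero b'
  have ht : μ (fundamentalDomain b') ≠ ⊤ :=
    (Bornology.IsBounded.measure_lt_top (fundamentalDomain_isBounded b')).ne
  have : ENNReal.ofReal |LinearMap.det (e : E →ₗ[ℝ] E)| = 1 := by
    have h' : ENNReal.ofReal |LinearMap.det (e : E →ₗ[ℝ] E)| * μ (fundamentalDomain b')
        = 1 * μ (fundamentalDomain b') := by rw [one_mul]; exact himg2.symm
    exact (ENNReal.mul_left_inj h0 ht).mp h'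
  rwa [ENNReal.ofReal_eq_one] at this

/-- The `ℝ`-linear automorphism `φ(x)` of `ℝ^n × ℂ^m`,
`φ(x)(y,z) = (e^{x_1}y_1, …, e^{x_n}y_n, e^{ψ_1(x)}z_1, …, e^{ψ_m(x)}z_m)`. -/
def phiMap {n m : ℕ} (ψ : Fin m → ((Fin n → ℝ) →ₗ[ℝ] ℂ)) (x : Fin n → ℝ) :
    ((Fin n → ℝ) × (Fin m → ℂ)) →ₗ[ℝ] ((Fin n → ℝ) × (Fin m → ℂ)) where
  toFun yz := (fun i => Real.exp (x i) * yz.1 i, fun k => Complex.exp (ψ k x) * yz.2 k)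
  map_add' u v := by
    refine Prod.ext (funext fun i => ?_) (funext fun k => ?_) <;> simp [mul_add]
  map_smul' c u := by
    refine Prod.ext (funext fun i => ?_) (funext fun k => ?_) <;>
      simp [Complex.real_smul] <;> ring

/-- let `Λ` be a full lattice in `ℝ^n` and `Δ` a full lattice in
`ℝ^n × ℂ^m`. If `φ(λ)(Δ) ⊆ Δ` for every `λ ∈ Λ`, then
`Σ_{i=1}^n x_i + 2 Σ_{k=1}^m Re ψ_k(x) = 0` for every `x ∈ ℝ^n`; equivalently
`exp(Σ_{i=1}^n x_i + Σ_{k=1}^m ψ_k(x) + Σ_{k=1}^m conj(ψ_k(x))) = 1` for all `x`. -/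
theorem trace_sum_eq_zero_of_lattice_preserving
    (n m : ℕ) (ψ : Fin m → ((Fin n → ℝ) →ₗ[ℝ] ℂ))
    (Λ : AddSubgroup (Fin n → ℝ))
    (hΛdisc : DiscreteTopology ↥Λ)
    (hΛspan : Submodule.span ℝ (Λ : Set (Fin n → ℝ)) = ⊤)
    (Δ : AddSubgroup ((Fin n → ℝ) × (Fin m → ℂ)))
    (hΔdisc : DiscreteTopology ↥Δ)
    (hΔspan : Submodule.span ℝ (Δ : Set ((Fin n → ℝ) × (Fin m → ℂ))) = ⊤)
    (hpres : ∀ v ∈ Λ, ∀ d ∈ Δ, phiMap ψ v d ∈ Δ) :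
    (∀ x : Fin n → ℝ, (∑ i, x i) + 2 * ∑ k, (ψ k x).re = 0) ∧
    (∀ x : Fin n → ℝ,
      Complex.exp (((∑ i, x i : ℝ) : ℂ) + ∑ k, ψ k x + ∑ k, (starRingEnd ℂ) (ψ k x)) = 1)
    := by
  classical
  -- `phiMap ψ v` and `phiMap ψ (-v)` are inverse to each other
  have hcomp : ∀ v : Fin n → ℝ, (phiMap ψ v).comp (phiMap ψ (-v)) = LinearMap.id := by
    intro v
    apply LinearMap.ext; intro yz
    refine Prod.ext (funext fun i => ?_) (funext fun k => ?_) <;>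
      simp [phiMap, ← mul_assoc, ← Real.exp_add, ← Complex.exp_add]
  let eE : (Fin n → ℝ) →
      (((Fin n → ℝ) × (Fin m → ℂ)) ≃ₗ[ℝ] ((Fin n → ℝ) × (Fin m → ℂ))) := fun v =>
    LinearEquiv.ofLinear (phiMap ψ v) (phiMap ψ (-v)) (hcomp v)
      (by simpa using hcomp (-v))
  -- decomposition of `phiMap` into a product map
  have hprod : ∀ v : Fin n → ℝ, phiMap ψ v =
      (diagR fun i => Real.exp (v i)).prodMap (diagC fun k => Complex.exp (ψ k v)) := by
    intro v; rfl
  -- determinant of `phiMap ψ v`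
  have hdet : ∀ v : Fin n → ℝ,
      LinearMap.det (phiMap ψ v) = Real.exp ((∑ i, v i) + 2 * ∑ k, (ψ k v).re) := by
    intro v
    have hns : ∀ k, Complex.normSq (Complex.exp (ψ k v)) = Real.exp (2 * (ψ k v).re) := by
      intro k
      rw [← Complex.sq_norm, Complex.norm_exp, sq, ← Real.exp_add, two_mul]
    rw [hprod v, det_prodMapR, det_diagR, det_diagC]
    simp_rw [hns]
    rw [← Real.exp_sum, ← Real.exp_sum, ← Real.exp_add, ← Finset.mul_sum]
  -- the lattice as a `ℤ`-submodule
  let L : Submodule ℤ ((Fin n → ℝ) × (Fin m → ℂ)) := AddSubgroup.toIntSubmodule Δ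
  haveI : DiscreteTopology L := hΔdisc
  haveI : IsZLattice ℝ L := ⟨by
    rw [show (L : Set ((Fin n → ℝ) × (Fin m → ℂ))) = (Δ : Set _) from rfl]; exact hΔspan⟩
  -- key : the trace form vanishes on `Λ`
  have key : ∀ v ∈ Λ, (∑ i, v i) + 2 * ∑ k, (ψ k v).re = 0 := by
    intro v hv
    have he : Submodule.map ((eE v).toLinearMap.restrictScalars ℤ) L = L := by
      apply le_antisymm
      · rw [Submodule.map_le_iff_le_comap]
        intro d hd
        exact hpres v hv d hd
      · intro z hz
        refine ⟨phiMap ψ (-v) z, hpres (-v) (neg_mem hv) z hz, ?_⟩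
        exact DFunLike.congr_fun (hcomp v) z
    haveI : (volume : Measure ((Fin n → ℝ) × (Fin m → ℂ))).IsAddHaarMeasure :=
      MeasureTheory.Measure.prod.instIsAddHaarMeasure volume volume
    have h1 : |LinearMap.det ((eE v) : ((Fin n → ℝ) × (Fin m → ℂ)) →ₗ[ℝ] _)| = 1 :=
      abs_det_eq_one_of_maps_lattice volume L (eE v) he
    have h2 : LinearMap.det (phiMap ψ v) = 1 := by
      have habs : |LinearMap.det (phiMap ψ v)| = 1 := h1
      rw [hdet v, abs_of_pos (Real.exp_pos _)] at habs
      rw [hdet v, habs]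
    rw [hdet v] at h2
    have := congrArg Real.log h2
    rwa [Real.log_exp, Real.log_one] at this
  -- extend from `Λ` to all of `ℝ^n` by linearity
  let F0 : (Fin n → ℝ) →ₗ[ℝ] ℝ :=
    (∑ i, LinearMap.proj i) + (2 : ℝ) • ∑ k, Complex.reLm.comp (ψ k)
  have hF0 : ∀ x, F0 x = (∑ i, x i) + 2 * ∑ k, (ψ k x).re := by
    intro x
    simp [F0, LinearMap.sum_apply, Finset.mul_sum]
  have part1 : ∀ x : Fin n → ℝ, (∑ i, x i) + 2 * ∑ k, (ψ k x).re = 0 := by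
    have hker : LinearMap.ker F0 = ⊤ := by
      rw [eq_top_iff, ← hΛspan, Submodule.span_le]
      intro v hv
      have : F0 v = 0 := by rw [hF0 v]; exact key v hv
      exact this
    intro x
    have : F0 x = 0 := LinearMap.mem_ker.mp (hker ▸ Submodule.mem_top)
    rwa [hF0 x] at this
  refine ⟨part1, fun x => ?_⟩
  have h2 : (∑ k, ψ k x) + ∑ k, (starRingEnd ℂ) (ψ k x)
      = ((2 * ∑ k, (ψ k x).re : ℝ) : ℂ) := by
    rw [← Finset.sum_add_distrib]
    push_cast [Finset.mul_sum]
    exact Finset.sum_congr rfl fun k _ => by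
      rw [Complex.add_conj]; push_cast; ring
  rw [add_assoc, h2, ← Complex.ofReal_add, part1 x, Complex.ofReal_zero, Complex.exp_zero]
end
end

section
/- Suppose Σ_{i=1}^n x_i + 2 Σ_{k=1}^m Re ψ_k(x) = 0 for every x ∈ ℝ^n, and let Λ ⊆ ℝ^n be a subgroup whose ℝ-span is all of ℝ^n. Let J ⊆ {1,…,n} and K, L ⊆ {1,…,m}, and suppose exp(Ψ_{JKL}(λ)) = 1 for every λ ∈ Λ. Then for every x ∈ ℝ^n, exp(Ψ_{J^c K^c L^c}(x)) = conj(exp(Ψ_{JKL}(x))), where J^c = {1,…,n} \ J, K^c = {1,…,m} \ K, L^c = {1,…,m} \ L. -/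
noncomputable section

/-- `PsiJKL` as an `ℝ`-linear map. -/
def PsiLin {n m : ℕ} (ψ : Fin m → ((Fin n → ℝ) →ₗ[ℝ] ℂ))
    (J : Finset (Fin n)) (Kf Lf : Finset (Fin m)) : (Fin n → ℝ) →ₗ[ℝ] ℂ where
  toFun x := ((∑ j ∈ J, x j : ℝ) : ℂ) + ∑ k ∈ Kf, ψ k x + ∑ l ∈ Lf, (starRingEnd ℂ) (ψ l x)
  map_add' x y := by
    simp only [Pi.add_apply, map_add, Finset.sum_add_distrib, Complex.ofReal_add]
    ring
  map_smul' c x := by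
    simp only [Pi.smul_apply, map_smul, smul_eq_mul, Complex.real_smul,
      Finset.mul_sum, Complex.ofReal_mul, RingHom.id_apply, map_mul, Complex.conj_ofReal]
    push_cast
    rw [mul_add, mul_add, Finset.mul_sum, Finset.mul_sum, Finset.mul_sum]

/-- The map `Ψ_{JKL} : ℝ^n → ℂ`,
`Ψ_{JKL}(x) = Σ_{j∈J} x_j + Σ_{k∈K} ψ_k(x) + Σ_{l∈L} conj(ψ_l(x))`. -/
def PsiJKL {n m : ℕ} (ψ : Fin m → ((Fin n → ℝ) →ₗ[ℝ] ℂ))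
    (J : Finset (Fin n)) (Kf Lf : Finset (Fin m)) (x : Fin n → ℝ) : ℂ :=
  ((∑ j ∈ J, x j : ℝ) : ℂ) + ∑ k ∈ Kf, ψ k x + ∑ l ∈ Lf, (starRingEnd ℂ) (ψ l x)

lemma PsiLin_eq {n m : ℕ} (ψ : Fin m → ((Fin n → ℝ) →ₗ[ℝ] ℂ))
    (J : Finset (Fin n)) (Kf Lf : Finset (Fin m)) (x : Fin n → ℝ) :
    PsiLin ψ J Kf Lf x = PsiJKL ψ J Kf Lf x := rfl

/-- suppose `Σ_{i=1}^n x_i + 2 Σ_{k=1}^m Re ψ_k(x) = 0` for every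
`x ∈ ℝ^n`, and let `Λ ⊆ ℝ^n` be a subgroup whose `ℝ`-span is all of `ℝ^n`. Let
`J ⊆ {1,…,n}` and `K, L ⊆ {1,…,m}`, and suppose `exp(Ψ_{JKL}(λ)) = 1` for every `λ ∈ Λ`.
Then for every `x ∈ ℝ^n`, `exp(Ψ_{J^c K^c L^c}(x)) = conj(exp(Ψ_{JKL}(x)))`. -/
theorem exp_PsiJKL_compl_eq_conj
    (n m : ℕ) (ψ : Fin m → ((Fin n → ℝ) →ₗ[ℝ] ℂ))
    (htrace : ∀ x : Fin n → ℝ, (∑ i, x i) + 2 * ∑ k, (ψ k x).re = 0)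
    (Λ : AddSubgroup (Fin n → ℝ))
    (hΛspan : Submodule.span ℝ (Λ : Set (Fin n → ℝ)) = ⊤)
    (J : Finset (Fin n)) (Kf Lf : Finset (Fin m))
    (hexp : ∀ v ∈ Λ, Complex.exp (PsiJKL ψ J Kf Lf v) = 1) :
    ∀ x : Fin n → ℝ,
      Complex.exp (PsiJKL ψ Jᶜ Kfᶜ Lfᶜ x) = (starRingEnd ℂ) (Complex.exp (PsiJKL ψ J Kf Lf x)) := by
  intro x
  -- the real part of Ψ vanishes everywhere
  set L : (Fin n → ℝ) →ₗ[ℝ] ℝ := Complex.reLm.comp (PsiLin ψ J Kf Lf) with hL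
  have hre : ∀ y : Fin n → ℝ, (PsiJKL ψ J Kf Lf y).re = 0 := by
    have hker : Submodule.span ℝ (Λ : Set (Fin n → ℝ)) ≤ LinearMap.ker L := by
      rw [Submodule.span_le]
      intro v hv
      have h1 := hexp v hv
      have h2 : Real.exp (PsiJKL ψ J Kf Lf v).re = 1 := by
        have := congrArg norm h1
        rwa [Complex.norm_exp, norm_one] at this
      have h3 : (PsiJKL ψ J Kf Lf v).re = 0 := by
        have := congrArg Real.log h2
        rwa [Real.log_exp, Real.log_one] at this
      simpa [hL, PsiLin_eq] using h3
    intro y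
    have hk : LinearMap.ker L = ⊤ := top_unique (hΛspan ▸ hker)
    have : L y = 0 := LinearMap.mem_ker.mp (hk.ge Submodule.mem_top)
    simpa [hL, PsiLin_eq] using this
  -- the complement sum is the negative
  have hsum : PsiJKL ψ Jᶜ Kfᶜ Lfᶜ x + PsiJKL ψ J Kf Lf x = 0 := by
    have h1 : (∑ j ∈ Jᶜ, x j) + ∑ j ∈ J, x j = ∑ i, x i := by
      rw [add_comm]; exact Finset.sum_add_sum_compl J x
    have h2 : (∑ k ∈ Kfᶜ, ψ k x) + ∑ k ∈ Kf, ψ k x = ∑ k, ψ k x := by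
      rw [add_comm]; exact Finset.sum_add_sum_compl Kf _
    have h3 : (∑ l ∈ Lfᶜ, (starRingEnd ℂ) (ψ l x)) + ∑ l ∈ Lf, (starRingEnd ℂ) (ψ l x)
        = ∑ l, (starRingEnd ℂ) (ψ l x) := by
      rw [add_comm]; exact Finset.sum_add_sum_compl Lf _
    have key : ((∑ i, x i : ℝ) : ℂ) + ∑ k, ψ k x + ∑ l, (starRingEnd ℂ) (ψ l x) = 0 := by
      have hconj : ∑ l, (starRingEnd ℂ) (ψ l x) = (starRingEnd ℂ) (∑ k, ψ k x) := by
        rw [map_sum]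
      rw [hconj]
      have : (∑ k, ψ k x) + (starRingEnd ℂ) (∑ k, ψ k x) = 2 * ((∑ k, ψ k x).re : ℂ) := by
        rw [Complex.add_conj]; push_cast; ring
      rw [add_assoc, this]
      have hre' : (∑ k, ψ k x).re = ∑ k, (ψ k x).re := by
        rw [Complex.re_sum]
      rw [hre']
      exact_mod_cast htrace x
    unfold PsiJKL
    calc _ = (((∑ j ∈ Jᶜ, x j) + ∑ j ∈ J, x j : ℝ) : ℂ)
          + ((∑ k ∈ Kfᶜ, ψ k x) + ∑ k ∈ Kf, ψ k x)
          + ((∑ l ∈ Lfᶜ, (starRingEnd ℂ) (ψ l x)) + ∑ l ∈ Lf, (starRingEnd ℂ) (ψ l x)) := by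
            push_cast; ring
      _ = 0 := by rw [h1, h2, h3]; exact key
  have hneg : PsiJKL ψ Jᶜ Kfᶜ Lfᶜ x = -PsiJKL ψ J Kf Lf x :=
    eq_neg_of_add_eq_zero_left hsum
  have hconjz : (starRingEnd ℂ) (PsiJKL ψ J Kf Lf x) = -PsiJKL ψ J Kf Lf x := by
    apply Complex.ext <;> simp [hre x]
  rw [hneg, ← Complex.exp_conj, hconjz]
end
end

section
/- Let Λ be a full lattice in ℝ^n and Δ a full lattice in ℝ^n × ℂ^m with φ(λ)(Δ) = Δ for every λ ∈ Λ. For (λ,δ) ∈ Λ × Δ define T_{λ,δ} : ℝ^n × (ℝ^n × ℂ^m) → ℝ^n × (ℝ^n × ℂ^m) by T_{λ,δ}(x,v) = (λ + x, δ + φ(λ)(v)). Then: (i) there exists a compact set F ⊆ ℝ^n × (ℝ^n × ℂ^m) such that every point lies in T_{λ,δ}(F) for some (λ,δ) ∈ Λ × Δ; and (ii) for every compact set C ⊆ ℝ^n × (ℝ^n × ℂ^m), the set {(λ,δ) ∈ Λ × Δ : T_{λ,δ}(C) ∩ C ≠ ∅} is finite. -/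
noncomputable section

/-- The affine map `T_{λ,δ} : ℝ^n × (ℝ^n × ℂ^m) → ℝ^n × (ℝ^n × ℂ^m)`,
`T_{λ,δ}(x,v) = (λ + x, δ + φ(λ)(v))`. -/
def tMap {n m : ℕ} (ψ : Fin m → ((Fin n → ℝ) →ₗ[ℝ] ℂ))
    (v : Fin n → ℝ) (d : (Fin n → ℝ) × (Fin m → ℂ)) :
    (Fin n → ℝ) × ((Fin n → ℝ) × (Fin m → ℂ)) →
      (Fin n → ℝ) × ((Fin n → ℝ) × (Fin m → ℂ)) :=
  fun xv => (v + xv.1, d + phiMap ψ v xv.2)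


section Aux

variable {E : Type*} [NormedAddCommGroup E] [NormedSpace ℝ E] [FiniteDimensional ℝ E]

/-- A full lattice admits a compact set covering the whole space by translates. -/
theorem lattice_compact_cover (L : AddSubgroup E) (hdisc : DiscreteTopology ↥L)
    (hspan : Submodule.span ℝ (L : Set E) = ⊤) :
    ∃ K : Set E, IsCompact K ∧ ∀ x : E, ∃ l ∈ L, x - l ∈ K := by
  set L' : Submodule ℤ E := AddSubgroup.toIntSubmodule L with hL'
  have hcoe : (L' : Set E) = (L : Set E) := rfl
  have hdisc' : DiscreteTopology ↥L' := hdisc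
  have : IsZLattice ℝ L' := ⟨by rw [hcoe]; exact hspan⟩
  have hfree : Module.Free ℤ ↥L' := ZLattice.module_free ℝ L'
  have hfin : Module.Finite ℤ ↥L' := ZLattice.module_finite ℝ L'
  set b := Module.Free.chooseBasis ℤ ↥L'
  set B := b.ofZLatticeBasis ℝ L'
  refine ⟨closure (ZSpan.fundamentalDomain B), ?_, fun x => ?_⟩
  · exact (ZSpan.fundamentalDomain_isBounded B).isCompact_closure
  · obtain ⟨v, hv, -⟩ := ZSpan.exist_unique_vadd_mem_fundamentalDomain B x
    have hvmem : (v : E) ∈ L := by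
      have h : Submodule.span ℤ (Set.range ⇑B) ≤ AddSubgroup.toIntSubmodule L :=
        le_of_eq (b.ofZLatticeBasis_span ℝ)
      exact h v.2
    have hv' : (v : E) + x ∈ ZSpan.fundamentalDomain B := hv
    refine ⟨-(v : E), neg_mem hvmem, subset_closure ?_⟩
    rw [sub_neg_eq_add, add_comm]
    exact hv'

/-- A discrete subgroup meets a compact set in a finite set. -/
theorem lattice_inter_compact_finite (L : AddSubgroup E) (hdisc : DiscreteTopology ↥L)
    {K : Set E} (hK : IsCompact K) : ((L : Set E) ∩ K).Finite := by
  have hclosed : IsClosed (L : Set E) := AddSubgroup.isClosed_of_discrete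
  have hcpt : IsCompact ((L : Set E) ∩ K) := hK.inter_left hclosed
  have : DiscreteTopology ↥((L : Set E) ∩ K) :=
    DiscreteTopology.of_subset hdisc Set.inter_subset_left
  exact hcpt.finite (isDiscrete_iff_discreteTopology.mpr this)

end Aux

theorem phiMap_add {n m : ℕ} (ψ : Fin m → ((Fin n → ℝ) →ₗ[ℝ] ℂ)) (a b : Fin n → ℝ)
    (yz : (Fin n → ℝ) × (Fin m → ℂ)) :
    phiMap ψ a (phiMap ψ b yz) = phiMap ψ (a + b) yz := by
  refine Prod.ext (funext fun i => ?_) (funext fun k => ?_) <;>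
    simp [phiMap, Real.exp_add, Complex.exp_add, mul_assoc]

theorem phiMap_neg_apply {n m : ℕ} (ψ : Fin m → ((Fin n → ℝ) →ₗ[ℝ] ℂ)) (a : Fin n → ℝ)
    (yz : (Fin n → ℝ) × (Fin m → ℂ)) :
    phiMap ψ a (phiMap ψ (-a) yz) = yz := by
  rw [phiMap_add]
  refine Prod.ext (funext fun i => ?_) (funext fun k => ?_) <;> simp [phiMap]
/-- let `Λ` be a full lattice in `ℝ^n` and `Δ` a full lattice in
`ℝ^n × ℂ^m` with `φ(λ)(Δ) = Δ` for every `λ ∈ Λ`. Then (i) there is a compact set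
`F ⊆ ℝ^n × (ℝ^n × ℂ^m)` such that every point lies in `T_{λ,δ}(F)` for some
`(λ,δ) ∈ Λ × Δ`; and (ii) for every compact `C`, only finitely many `(λ,δ) ∈ Λ × Δ`
satisfy `T_{λ,δ}(C) ∩ C ≠ ∅`. -/
theorem tMap_action_cocompact_and_properly_discontinuous
    (n m : ℕ) (ψ : Fin m → ((Fin n → ℝ) →ₗ[ℝ] ℂ))
    (Λ : AddSubgroup (Fin n → ℝ))
    (hΛdisc : DiscreteTopology ↥Λ)
    (hΛspan : Submodule.span ℝ (Λ : Set (Fin n → ℝ)) = ⊤)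
    (Δ : AddSubgroup ((Fin n → ℝ) × (Fin m → ℂ)))
    (hΔdisc : DiscreteTopology ↥Δ)
    (hΔspan : Submodule.span ℝ (Δ : Set ((Fin n → ℝ) × (Fin m → ℂ))) = ⊤)
    (hpres : ∀ v ∈ Λ, phiMap ψ v '' (Δ : Set ((Fin n → ℝ) × (Fin m → ℂ)))
      = (Δ : Set ((Fin n → ℝ) × (Fin m → ℂ)))) :
    (∃ F : Set ((Fin n → ℝ) × ((Fin n → ℝ) × (Fin m → ℂ))),
      IsCompact F ∧
      ∀ xv : (Fin n → ℝ) × ((Fin n → ℝ) × (Fin m → ℂ)),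
        ∃ v ∈ Λ, ∃ d ∈ Δ, xv ∈ tMap ψ v d '' F) ∧
    (∀ C : Set ((Fin n → ℝ) × ((Fin n → ℝ) × (Fin m → ℂ))), IsCompact C →
      {p : (Fin n → ℝ) × ((Fin n → ℝ) × (Fin m → ℂ)) |
        p.1 ∈ Λ ∧ p.2 ∈ Δ ∧ (tMap ψ p.1 p.2 '' C ∩ C).Nonempty}.Finite) := by
  obtain ⟨K₁, hK₁c, hK₁⟩ := lattice_compact_cover Λ hΛdisc hΛspan
  obtain ⟨K₂, hK₂c, hK₂⟩ := lattice_compact_cover Δ hΔdisc hΔspan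
  have hpresMem : ∀ v ∈ Λ, ∀ d ∈ Δ, phiMap ψ v d ∈ Δ := by
    intro v hv d hd
    have := hpres v hv
    have : phiMap ψ v d ∈ phiMap ψ v '' (Δ : Set _) := ⟨d, hd, rfl⟩
    rwa [hpres v hv] at this
  constructor
  · refine ⟨K₁ ×ˢ K₂, hK₁c.prod hK₂c, fun xv => ?_⟩
    obtain ⟨x, v⟩ := xv
    obtain ⟨l, hl, hxl⟩ := hK₁ x
    obtain ⟨d', hd', hwd⟩ := hK₂ (phiMap ψ (-l) v)
    refine ⟨l, hl, phiMap ψ l d', hpresMem l hl d' hd',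
      ⟨(x - l, phiMap ψ (-l) v - d'), ⟨hxl, hwd⟩, ?_⟩⟩
    simp only [tMap, map_sub]
    refine Prod.ext ?_ ?_
    · simp
    · simp [phiMap_neg_apply]
  · intro C hC
    set C₁ : Set (Fin n → ℝ) := Prod.fst '' C with hC₁
    set C₂ : Set ((Fin n → ℝ) × (Fin m → ℂ)) := Prod.snd '' C with hC₂
    have hC₁c : IsCompact C₁ := hC.image continuous_fst
    have hC₂c : IsCompact C₂ := hC.image continuous_snd
    set D₁ : Set (Fin n → ℝ) := (fun p : (Fin n → ℝ) × (Fin n → ℝ) => p.1 - p.2) '' (C₁ ×ˢ C₁)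
    have hD₁c : IsCompact D₁ := (hC₁c.prod hC₁c).image (continuous_fst.sub continuous_snd)
    have hA : ((Λ : Set (Fin n → ℝ)) ∩ D₁).Finite :=
      lattice_inter_compact_finite Λ hΛdisc hD₁c
    set K' : Set ((Fin n → ℝ) × (Fin m → ℂ)) :=
      ⋃ l ∈ (Λ : Set (Fin n → ℝ)) ∩ D₁, phiMap ψ l '' C₂ with hK'
    have hK'c : IsCompact K' :=
      hA.isCompact_biUnion fun l _ =>
        hC₂c.image (phiMap ψ l).continuous_of_finiteDimensional
    set D₂ : Set ((Fin n → ℝ) × (Fin m → ℂ)) :=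
      (fun p : ((Fin n → ℝ) × (Fin m → ℂ)) × ((Fin n → ℝ) × (Fin m → ℂ)) => p.1 - p.2) ''
        (C₂ ×ˢ K')
    have hD₂c : IsCompact D₂ := (hC₂c.prod hK'c).image (continuous_fst.sub continuous_snd)
    have hB : ((Δ : Set ((Fin n → ℝ) × (Fin m → ℂ))) ∩ D₂).Finite :=
      lattice_inter_compact_finite Δ hΔdisc hD₂c
    refine Set.Finite.subset (hA.prod hB) ?_
    rintro ⟨l, d⟩ ⟨hl, hd, ⟨w, ⟨⟨x, v⟩, hxvC, hTw⟩, hwC⟩⟩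
    have hl' : l ∈ (Λ : Set (Fin n → ℝ)) ∩ D₁ := by
      refine ⟨hl, ⟨(w.1, x), ⟨⟨w, hwC, rfl⟩, ⟨(x, v), hxvC, rfl⟩⟩, ?_⟩⟩
      have h1 : w.1 = l + x := by rw [← hTw]; rfl
      simp [h1]
    refine ⟨hl', hd, ?_⟩
    · refine ⟨(w.2, phiMap ψ l v), ⟨⟨w, hwC, rfl⟩, ?_⟩, ?_⟩
      · exact Set.mem_biUnion hl' ⟨v, ⟨(x, v), hxvC, rfl⟩, rfl⟩
      · have h2 : w.2 = d + phiMap ψ l v := by rw [← hTw]; rfl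
        simp [h2]
end
end
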